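/- arXiv:1511.08101 — 6 statements merged into one kernel-verified Lean document; each statement's English description precedes it below -/
import Mathlib

section
/- A vectorial Boolean function F from F_2^m to F_2^m is APN if and only if for all nonzero a in F_2^m, the sum over all λ in F_2^m of F(D_a F_λ)^2 equals 2^{2m+1}, where F(g) = Σ_x (-1)^{g(x)} is the Fourier coefficient at 0. -/
open scoped Classical

/-- Boolean functions on `m` bits. -/
abbrev BF (m : ℕ) := (Fin m → ZMod 2) → ZMod 2

/-- Vectorial Boolean functions on `m` bits. -/
abbrev VBF (m : ℕ) := (Fin m → ZMod 2) → (Fin m → ZMod 2)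

/-- Derivative of a Boolean function in direction `a`. -/
def bDeriv {m : ℕ} (a : Fin m → ZMod 2) (f : BF m) : BF m := fun x => f (x + a) + f x

/-- Component of a vectorial Boolean function in direction `lam`. -/
def bComp {m : ℕ} (lam : Fin m → ZMod 2) (F : VBF m) : BF m := fun x => ∑ i, lam i * F x i

/-- Fourier coefficient at 0:  `∑ x, (-1)^(f x)`. -/
def bFourier {m : ℕ} (f : BF m) : ℤ := ∑ x : Fin m → ZMod 2, (-1 : ℤ) ^ (f x).val

/-- A Boolean function is balanced if it takes the value 1 exactly `2^(m-1)` times. -/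
def bBalanced {m : ℕ} (f : BF m) : Prop :=
  (Finset.univ.filter (fun x => f x = 1)).card = 2 ^ (m - 1)

/-- Almost Perfect Nonlinear: every derivative equation `F(x+a)+F(x)=b`, `a ≠ 0`,
has at most 2 solutions. -/
def bIsAPN {m : ℕ} (F : VBF m) : Prop :=
  ∀ a : Fin m → ZMod 2, a ≠ 0 → ∀ b : Fin m → ZMod 2,
    (Finset.univ.filter (fun x => F (x + a) + F x = b)).card ≤ 2

/-- Bent: all nonzero derivatives are balanced. -/
def bBent {m : ℕ} (f : BF m) : Prop := ∀ a, a ≠ 0 → bBalanced (bDeriv a f)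

/-- ANF coefficient of `f` at the monomial indexed by `S`. -/
def bAnfCoeff {m : ℕ} (f : BF m) (S : Finset (Fin m)) : ZMod 2 :=
  ∑ x : Fin m → ZMod 2, (∏ i ∈ Sᶜ, (1 + x i)) * f x

/-- Algebraic degree at most `d`. -/
def bDegLE {m : ℕ} (f : BF m) (d : ℕ) : Prop :=
  ∀ S : Finset (Fin m), d < S.card → bAnfCoeff f S = 0

/-- Algebraic degree of a Boolean function. -/
noncomputable def bAlgDeg {m : ℕ} (f : BF m) : ℕ := sInf {d | bDegLE f d}

/-- The restriction of `f` to the subspace `V` is affine. -/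
def bAffineOn {m : ℕ} (f : BF m) (V : Submodule (ZMod 2) (Fin m → ZMod 2)) : Prop :=
  ∀ x ∈ V, ∀ y ∈ V, ∀ z ∈ V, f (x + y + z) = f x + f y + f z

/-- The restriction of `f` to the subspace `U` is bent: every derivative in a nonzero
direction of `U` is balanced on `U`. -/
def bBentOn {m : ℕ} (f : BF m) (U : Submodule (ZMod 2) (Fin m → ZMod 2)) : Prop :=
  ∀ a ∈ U, a ≠ 0 →
    2 * (Finset.univ.filter (fun x => x ∈ U ∧ f (x + a) + f x = 1)).card
      = (Finset.univ.filter (fun x => x ∈ U)).card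

/-- Partially bent Boolean function. -/
def bPartiallyBent {m : ℕ} (f : BF m) : Prop :=
  ∃ V U : Submodule (ZMod 2) (Fin m → ZMod 2), IsCompl V U ∧ bAffineOn f V ∧ bBentOn f U

/-- `a` is a linear structure of `f`: the derivative `D_a f` is constant. -/
def bLinStruct {m : ℕ} (f : BF m) (a : Fin m → ZMod 2) : Prop :=
  ∃ c : ZMod 2, ∀ x, f (x + a) + f x = c

/-- The set of directions in which the derivative of `f` is balanced. -/
noncomputable def bGamma {m : ℕ} (f : BF m) : Finset (Fin m → ZMod 2) :=
  Finset.univ.filter (fun a => bBalanced (bDeriv a f))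


/-! ### Auxiliary lemmas for `stmt0` -/

private def chi (u : ZMod 2) : ℤ := (-1) ^ u.val

private lemma chi_add : ∀ u v : ZMod 2, chi (u + v) = chi u * chi v := by decide

private lemma chi_sum {ι : Type*} (s : Finset ι) (g : ι → ZMod 2) :
    chi (∑ i ∈ s, g i) = ∏ i ∈ s, chi (g i) := by
  induction s using Finset.cons_induction with
  | empty => simp [chi]
  | cons i s hi ih => rw [Finset.sum_cons, Finset.prod_cons, chi_add, ih]

private lemma sum_chi_single : ∀ w : ZMod 2, (∑ c : ZMod 2, chi (c * w)) = if w = 0 then 2 else 0 := by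
  decide

private lemma sum_chi {m : ℕ} (v : Fin m → ZMod 2) :
    (∑ lam : Fin m → ZMod 2, chi (∑ i, lam i * v i)) = if v = 0 then 2 ^ m else 0 := by
  simp_rw [chi_sum]
  rw [← Fintype.prod_sum fun (i : Fin m) (c : ZMod 2) => chi (c * v i)]
  simp_rw [sum_chi_single]
  by_cases hv : v = 0
  · simp [hv]
  · obtain ⟨i, hi⟩ : ∃ i, v i ≠ 0 := by
      by_contra h; push_neg at h; exact hv (funext fun i => h i)
    rw [if_neg hv]
    exact Finset.prod_eq_zero (Finset.mem_univ i) (by simp [hi])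

private lemma pi_add_eq_zero {m : ℕ} (u w : Fin m → ZMod 2) : u + w = 0 ↔ u = w := by
  constructor
  · intro h
    funext i
    have := congrFun h i
    revert this
    have : ∀ p q : ZMod 2, p + q = 0 → p = q := by decide
    exact this (u i) (w i)
  · rintro rfl
    funext i
    exact (by decide : ∀ p : ZMod 2, p + p = 0) (u i)

private lemma key_identity {m : ℕ} (F : VBF m) (a : Fin m → ZMod 2) :
    (∑ lam : Fin m → ZMod 2, (bFourier (bDeriv a (bComp lam F))) ^ 2)
      = 2 ^ m * ∑ b : Fin m → ZMod 2,
          ((Finset.univ.filter (fun x => F (x + a) + F x = b)).card : ℤ) ^ 2 := by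
  set D : (Fin m → ZMod 2) → (Fin m → ZMod 2) := fun x => F (x + a) + F x with hD
  have h2 : ∀ lam x, bDeriv a (bComp lam F) x = ∑ i, lam i * D x i := by
    intro lam x
    unfold bDeriv bComp
    rw [← Finset.sum_add_distrib]
    exact Finset.sum_congr rfl fun i _ => by simp [hD, mul_add]
  have hf : ∀ lam, bFourier (bDeriv a (bComp lam F)) = ∑ x, chi (∑ i, lam i * D x i) :=
    fun lam => Finset.sum_congr rfl fun x _ => congrArg chi (h2 lam x)
  calc (∑ lam : Fin m → ZMod 2, (bFourier (bDeriv a (bComp lam F))) ^ 2)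
      = ∑ lam : Fin m → ZMod 2, ∑ x : Fin m → ZMod 2, ∑ y : Fin m → ZMod 2,
          chi (∑ i, lam i * (D x + D y) i) := by
        refine Finset.sum_congr rfl fun lam _ => ?_
        rw [hf, sq, Finset.sum_mul_sum]
        refine Finset.sum_congr rfl fun x _ => Finset.sum_congr rfl fun y _ => ?_
        rw [← chi_add]
        congr 1
        rw [← Finset.sum_add_distrib]
        refine Finset.sum_congr rfl fun i _ => ?_
        simp [mul_add]
    _ = ∑ x : Fin m → ZMod 2, ∑ y : Fin m → ZMod 2, ∑ lam : Fin m → ZMod 2,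
          chi (∑ i, lam i * (D x + D y) i) := by
        rw [Finset.sum_comm]
        exact Finset.sum_congr rfl fun x _ => Finset.sum_comm
    _ = ∑ x, ∑ y : Fin m → ZMod 2, if D x = D y then (2 : ℤ) ^ m else 0 := by
        refine Finset.sum_congr rfl fun x _ => Finset.sum_congr rfl fun y _ => ?_
        rw [sum_chi]
        congr 1
        simp only [eq_iff_iff]
        exact pi_add_eq_zero _ _
    _ = 2 ^ m * ∑ x, ((Finset.univ.filter (fun y => D y = D x)).card : ℤ) := by
        rw [Finset.mul_sum]
        refine Finset.sum_congr rfl fun x _ => ?_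
        rw [← Finset.sum_boole, Finset.mul_sum]
        refine Finset.sum_congr rfl fun y _ => ?_
        by_cases h : D x = D y
        · simp [h]
        · simp [h, Ne.symm h]
    _ = 2 ^ m * ∑ b : Fin m → ZMod 2,
          ((Finset.univ.filter (fun x => F (x + a) + F x = b)).card : ℤ) ^ 2 := by
        congr 1
        rw [← Finset.sum_fiberwise' Finset.univ D
          (fun b => ((Finset.univ.filter (fun y => D y = b)).card : ℤ))]
        refine Finset.sum_congr rfl fun b _ => ?_
        rw [Finset.sum_const, nsmul_eq_mul, sq]

private lemma two_le_card_sol {m : ℕ} (F : VBF m) {a : Fin m → ZMod 2} (ha : a ≠ 0)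
    (b : Fin m → ZMod 2)
    (hne : (Finset.univ.filter (fun x => F (x + a) + F x = b)).Nonempty) :
    2 ≤ (Finset.univ.filter (fun x => F (x + a) + F x = b)).card := by
  obtain ⟨x, hx⟩ := hne
  rw [Finset.mem_filter] at hx
  have haa : a + a = 0 := by
    funext i; exact (by decide : ∀ p : ZMod 2, p + p = 0) (a i)
  have hxa : x + a + a = x := by rw [add_assoc, haa, add_zero]
  have hmem : x + a ∈ Finset.univ.filter (fun x => F (x + a) + F x = b) := by
    rw [Finset.mem_filter]
    refine ⟨Finset.mem_univ _, ?_⟩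
    rw [hxa, add_comm (F x)]
    exact hx.2
  have hne' : x + a ≠ x := fun h => ha (by rwa [add_eq_left] at h)
  exact Finset.one_lt_card.mpr
    ⟨x + a, hmem, x, Finset.mem_filter.mpr ⟨Finset.mem_univ _, hx.2⟩, hne'⟩

private lemma sum_card_fibers {m : ℕ} (F : VBF m) (a : Fin m → ZMod 2) :
    ∑ b : Fin m → ZMod 2, (Finset.univ.filter (fun x => F (x + a) + F x = b)).card = 2 ^ m := by
  rw [← Finset.card_eq_sum_card_fiberwise
    (f := fun x => F (x + a) + F x) (t := Finset.univ) (fun x _ => Finset.mem_univ _),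
    Finset.card_univ]
  simp [Fintype.card_fun]

theorem stmt0 (m : ℕ) (F : VBF m) :
    bIsAPN F ↔ ∀ a : Fin m → ZMod 2, a ≠ 0 →
      (∑ lam : Fin m → ZMod 2, (bFourier (bDeriv a (bComp lam F))) ^ 2) = 2 ^ (2 * m + 1) := by
  constructor
  · intro hAPN a ha
    rw [key_identity F a]
    have hN : ∀ b : Fin m → ZMod 2,
        ((Finset.univ.filter (fun x => F (x + a) + F x = b)).card : ℤ) ^ 2
          = 2 * ((Finset.univ.filter (fun x => F (x + a) + F x = b)).card : ℤ) := by
      intro b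
      rcases Finset.eq_empty_or_nonempty
          (Finset.univ.filter (fun x => F (x + a) + F x = b)) with h | h
      · simp [h]
      · have h2 := two_le_card_sol F ha b h
        have h2' := hAPN a ha b
        have hcard : (Finset.univ.filter (fun x => F (x + a) + F x = b)).card = 2 :=
          le_antisymm h2' h2
        rw [hcard]; norm_num
    rw [Finset.sum_congr rfl fun b _ => hN b, ← Finset.mul_sum]
    have hsum : ∑ b : Fin m → ZMod 2,
        ((Finset.univ.filter (fun x => F (x + a) + F x = b)).card : ℤ) = 2 ^ m := by
      rw [← Nat.cast_sum, sum_card_fibers]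
      push_cast
      ring
    rw [hsum]
    ring
  · intro h a ha b
    have hk := key_identity F a
    rw [h a ha] at hk
    have hS : ∑ b : Fin m → ZMod 2,
        ((Finset.univ.filter (fun x => F (x + a) + F x = b)).card : ℤ) ^ 2 = 2 ^ (m + 1) := by
      have h2m : (2 : ℤ) ^ (2 * m + 1) = 2 ^ m * 2 ^ (m + 1) := by
        rw [← pow_add]; ring_nf
      rw [h2m] at hk
      exact mul_left_cancel₀ (pow_ne_zero m two_ne_zero) hk.symm
    have hsum : ∑ c : Fin m → ZMod 2,
        2 * ((Finset.univ.filter (fun x => F (x + a) + F x = c)).card : ℤ) = 2 ^ (m + 1) := by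
      rw [← Finset.mul_sum, ← Nat.cast_sum, sum_card_fibers]
      push_cast
      ring
    have hle : ∀ c ∈ (Finset.univ : Finset (Fin m → ZMod 2)),
        2 * ((Finset.univ.filter (fun x => F (x + a) + F x = c)).card : ℤ)
          ≤ ((Finset.univ.filter (fun x => F (x + a) + F x = c)).card : ℤ) ^ 2 := by
      intro c _
      rcases Finset.eq_empty_or_nonempty
          (Finset.univ.filter (fun x => F (x + a) + F x = c)) with hc | hc
      · simp [hc]
      · have h2 := two_le_card_sol F ha c hc
        have h2' : (2 : ℤ) ≤ ((Finset.univ.filter (fun x => F (x + a) + F x = c)).card : ℤ) := by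
          exact_mod_cast h2
        nlinarith
    have heq : ∀ c ∈ (Finset.univ : Finset (Fin m → ZMod 2)),
        ((Finset.univ.filter (fun x => F (x + a) + F x = c)).card : ℤ) ^ 2
          = 2 * ((Finset.univ.filter (fun x => F (x + a) + F x = c)).card : ℤ) := by
      have := (Finset.sum_eq_sum_iff_of_le hle).mp (by rw [hS, hsum])
      intro c hc
      exact (this c hc).symm
    have hb := heq b (Finset.mem_univ b)
    set N : ℤ := ((Finset.univ.filter (fun x => F (x + a) + F x = b)).card : ℤ) with hNdef
    have hN0 : (0 : ℤ) ≤ N := by positivity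
    have hle2 : N ≤ 2 := by nlinarith
    rw [hNdef] at hle2
    exact_mod_cast hle2
end

section
/- If F: F_2^m → F_2^m is an APN permutation with m even, and there exist nonzero a, λ in F_2^m such that the derivative D_a F_λ is constant, then D_a F_λ is identically equal to 1. -/
open scoped Classical

theorem stmt3 (m : ℕ) (hm : Even m) (F : VBF m) (hF : bIsAPN F)
    (hbij : Function.Bijective F) (a lam : Fin m → ZMod 2) (ha : a ≠ 0) (hlam : lam ≠ 0)
    (hconst : ∃ c : ZMod 2, ∀ x, bDeriv a (bComp lam F) x = c) :
    ∀ x, bDeriv a (bComp lam F) x = 1 := by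
  classical
  obtain ⟨c, hc⟩ := hconst
  by_cases hc1 : c = 1
  · intro x; rw [hc x, hc1]
  exfalso
  have hc0 : c = 0 := by
    have h01 : ∀ t : ZMod 2, t ≠ 1 → t = 0 := by decide
    exact h01 c hc1
  -- the linear functional
  set φ : (Fin m → ZMod 2) → ZMod 2 := fun y => ∑ i, lam i * y i with hφ
  have hφadd : ∀ y z, φ (y + z) = φ y + φ z := by
    intro y z
    simp [hφ, mul_add, Finset.sum_add_distrib]
  set D : (Fin m → ZMod 2) → (Fin m → ZMod 2) := fun x => F (x + a) + F x with hD
  have hDφ : ∀ x, φ (D x) = 0 := by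
    intro x
    have h := hc x
    rw [hc0] at h
    simpa [bDeriv, bComp, hD, hφ, mul_add, Finset.sum_add_distrib] using h
  have hself : ∀ y : Fin m → ZMod 2, y + y = 0 := by
    intro y; funext j; exact CharTwo.add_self_eq_zero (y j)
  have hD0 : ∀ x, D x ≠ 0 := by
    intro x h
    apply ha
    have h' : F (x + a) + F x = 0 := by rw [hD] at h; exact h
    have hFF : F (x + a) = F x := by
      have := congrArg (· + F x) h'
      simpa [add_assoc, hself] using this
    have hxa : x + a = x + 0 := by rw [add_zero]; exact hbij.injective hFF
    exact add_left_cancel hxa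
  -- hyperplane cardinality
  obtain ⟨i, hi⟩ : ∃ i, lam i ≠ 0 := by
    by_contra h
    push_neg at h
    exact hlam (funext h)
  have hi1 : lam i = 1 := by
    have h01 : ∀ t : ZMod 2, t ≠ 0 → t = 1 := by decide
    exact h01 _ hi
  set e : Fin m → ZMod 2 := Pi.single i 1 with he
  have hφe : φ e = 1 := by
    simp [hφ, he, Pi.single_apply, Finset.mul_sum, hi1]
  set S0 : Finset (Fin m → ZMod 2) := Finset.univ.filter (fun y => φ y = 0) with hS0
  set S1 : Finset (Fin m → ZMod 2) := Finset.univ.filter (fun y => φ y = 1) with hS1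
  have hinvol : ∀ y : Fin m → ZMod 2, y + e + e = y := by
    intro y
    funext j
    simp [add_assoc, CharTwo.add_self_eq_zero]
  have hcard01 : S0.card = S1.card := by
    apply Finset.card_bij' (fun y _ => y + e) (fun y _ => y + e)
    · intro y hy
      simp only [hS0, Finset.mem_filter, Finset.mem_univ, true_and] at hy
      simp [hS1, hφadd, hy, hφe]
    · intro y hy
      simp only [hS1, Finset.mem_filter, Finset.mem_univ, true_and] at hy
      simp only [hS0, Finset.mem_filter, Finset.mem_univ, true_and]
      rw [hφadd, hy, hφe]
      decide
    · intro y _; exact hinvol y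
    · intro y _; exact hinvol y
  have hsplit : S0.card + S1.card = 2 ^ m := by
    have h1 : ∀ y : Fin m → ZMod 2, (φ y = 1) ↔ ¬ (φ y = 0) := by
      intro y
      constructor
      · intro h h0; rw [h0] at h; exact one_ne_zero h.symm
      · intro h
        revert h
        generalize φ y = t
        revert t; decide
    have : S1 = Finset.univ.filter (fun y => ¬ (φ y = 0)) := by
      rw [hS1]; apply Finset.filter_congr; intro y _; simpa using h1 y
    rw [this, hS0, Finset.card_filter_add_card_filter_not]
    simp [Finset.card_univ]
  have hS0card : S0.card * 2 = 2 ^ m := by omega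
  have h0S0 : (0 : Fin m → ZMod 2) ∈ S0 := by
    simp [hS0, hφ]
  -- image counting
  set Im : Finset (Fin m → ZMod 2) := Finset.univ.image D with hIm
  have hfib : (Finset.univ : Finset (Fin m → ZMod 2)).card
      = ∑ b ∈ Im, (Finset.univ.filter (fun x => D x = b)).card := by
    apply Finset.card_eq_sum_card_fiberwise
    intro x _
    exact Finset.mem_image_of_mem D (Finset.mem_univ x)
  have hle : 2 ^ m ≤ Im.card * 2 := by
    have h2 : ∀ b ∈ Im, (Finset.univ.filter (fun x => D x = b)).card ≤ 2 := by
      intro b _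
      exact hF a ha b
    calc 2 ^ m = (Finset.univ : Finset (Fin m → ZMod 2)).card := by
          simp [Finset.card_univ]
      _ = ∑ b ∈ Im, (Finset.univ.filter (fun x => D x = b)).card := hfib
      _ ≤ ∑ _b ∈ Im, 2 := Finset.sum_le_sum h2
      _ = Im.card * 2 := by rw [Finset.sum_const, smul_eq_mul]
  have hsub : Im ⊆ S0.erase 0 := by
    intro b hb
    rw [hIm, Finset.mem_image] at hb
    obtain ⟨x, _, rfl⟩ := hb
    rw [Finset.mem_erase]
    exact ⟨hD0 x, by simp [hS0, hDφ x]⟩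
  have hImcard : Im.card ≤ S0.card - 1 := by
    have := Finset.card_le_card hsub
    have h2 := Finset.card_erase_of_mem h0S0
    omega
  have h1le : 1 ≤ S0.card := Finset.card_pos.mpr ⟨0, h0S0⟩
  omega
end

section
/- A quadratic Boolean function f: F_2^m → F_2 is balanced if and only if its restriction to its space of linear structures V(f) is not constant. -/
open scoped Classical

/- ------------------ auxiliary lemmas ------------------ -/

lemma zHelp1 : ∀ u : ZMod 2, u + (1 + u) = 1 := by decide

lemma zHelp2 : ∀ u v : ZMod 2, u ≠ v → u + (1 + v) = 0 := by decide

lemma zAddSelf : ∀ u : ZMod 2, u + u = 0 := by decide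

lemma zFlip : ∀ A B C D E F G H : ZMod 2,
    A + B + C + D + E + F + G + H = 0 → D + F ≠ G + H → A + B = C + E + 1 := by decide

lemma zFlip2 : ∀ A B C D : ZMod 2, A + B = C + D → C ≠ D → A + D = B + D + 1 := by decide

lemma zComb : ∀ A B C p q : ZMod 2, A + B = p → B + C = q → A + C = q + p := by decide

lemma zPowAddSelf : ∀ u : ZMod 2, ((-1 : ℤ) ^ ((u + u).val) : ℤ) = 1 := by
  intro u; fin_cases u <;> rfl

lemma neg_one_pow_add (u v : ZMod 2) :
    ((-1 : ℤ) ^ ((u + v).val) : ℤ) = ((-1 : ℤ) ^ u.val) * ((-1 : ℤ) ^ v.val) := by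
  fin_cases u <;> fin_cases v <;> rfl

lemma neg_one_pow_flip (u : ZMod 2) :
    ((-1 : ℤ) ^ ((u + 1).val) : ℤ) = -((-1 : ℤ) ^ u.val) := by
  fin_cases u <;> rfl

lemma pi_add_self {m : ℕ} (a : Fin m → ZMod 2) : a + a = 0 := by
  funext i
  exact zAddSelf _

lemma pair_sum_zero {m : ℕ} (s : Finset (Fin m → ZMod 2)) (h : (Fin m → ZMod 2) → ZMod 2)
    (a₀ : Fin m → ZMod 2) (hs : ∀ a ∈ s, a + a₀ ∈ s)
    (hflip : ∀ a ∈ s, h (a + a₀) = h a + 1) :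
    ∑ a ∈ s, (-1 : ℤ) ^ (h a).val = 0 := by
  have key : ∑ a ∈ s, (-1 : ℤ) ^ (h a).val = ∑ a ∈ s, (-1 : ℤ) ^ (h (a + a₀)).val := by
    apply Finset.sum_nbij' (fun a => a + a₀) (fun a => a + a₀)
    · exact hs
    · exact hs
    · intro a _; rw [add_assoc, pi_add_self, add_zero]
    · intro a _; rw [add_assoc, pi_add_self, add_zero]
    · intro a ha; rw [add_assoc, pi_add_self, add_zero]
  have key2 : ∑ a ∈ s, (-1 : ℤ) ^ (h (a + a₀)).val = -∑ a ∈ s, (-1 : ℤ) ^ (h a).val := by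
    rw [← Finset.sum_neg_distrib]
    apply Finset.sum_congr rfl
    intro a ha
    rw [hflip a ha]
    exact neg_one_pow_flip _
  rw [key2] at key
  linarith

lemma delta_prod {m : ℕ} (x y : Fin m → ZMod 2) :
    (∏ i, (x i + (1 + y i))) = if x = y then 1 else 0 := by
  split_ifs with h
  · subst h
    apply Finset.prod_eq_one
    intro i _
    exact zHelp1 _
  · obtain ⟨i, hi⟩ : ∃ i, x i ≠ y i := by
      by_contra hc; push_neg at hc; exact h (funext hc)
    exact Finset.prod_eq_zero (Finset.mem_univ i) (zHelp2 _ _ hi)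

lemma anf_expand {m : ℕ} (f : BF m) (x : Fin m → ZMod 2) :
    f x = ∑ S : Finset (Fin m), bAnfCoeff f S * ∏ i ∈ S, x i := by
  unfold bAnfCoeff
  simp_rw [Finset.sum_mul]
  rw [Finset.sum_comm]
  have key : ∀ y, (∑ S : Finset (Fin m), ((∏ i ∈ Sᶜ, (1 + y i)) * f y) * ∏ i ∈ S, x i)
      = f y * ∏ i, (x i + (1 + y i)) := by
    intro y
    rw [Finset.prod_add, Finset.mul_sum, ← Finset.powerset_univ]
    apply Finset.sum_congr rfl
    intro S _
    rw [Finset.compl_eq_univ_sdiff]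
    ring
  simp_rw [key, delta_prod]
  simp

lemma cube_mono {m : ℕ} (S : Finset (Fin m)) (hS : S.card ≤ 2) (x y z : Fin m → ZMod 2) :
    (∏ i ∈ S, (x+y+z) i) + (∏ i ∈ S, (x+y) i) + (∏ i ∈ S, (x+z) i) + (∏ i ∈ S, (y+z) i)
      + (∏ i ∈ S, x i) + (∏ i ∈ S, y i) + (∏ i ∈ S, z i)
      + (∏ i ∈ S, (0 : Fin m → ZMod 2) i) = 0 := by
  obtain h0 | h1 | h2 : S.card = 0 ∨ S.card = 1 ∨ S.card = 2 := by omega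
  · obtain rfl := Finset.card_eq_zero.mp h0
    simp only [Finset.prod_empty]; decide
  · obtain ⟨i, rfl⟩ := Finset.card_eq_one.mp h1
    simp only [Finset.prod_singleton, Pi.add_apply, Pi.zero_apply]
    generalize x i = p; generalize y i = q; generalize z i = r
    revert p q r; decide
  · obtain ⟨i, j, hij, rfl⟩ := Finset.card_eq_two.mp h2
    simp only [Finset.prod_pair hij, Pi.add_apply, Pi.zero_apply]
    generalize x i = p; generalize y i = q; generalize z i = r
    generalize x j = p'; generalize y j = q'; generalize z j = r'
    revert p q r p' q' r'; decide

lemma deg2_cube {m : ℕ} (f : BF m) (hdeg : bDegLE f 2) (x y z : Fin m → ZMod 2) :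
    f (x+y+z) + f (x+y) + f (x+z) + f (y+z) + f x + f y + f z + f 0 = 0 := by
  rw [anf_expand f (x+y+z), anf_expand f (x+y), anf_expand f (x+z), anf_expand f (y+z),
    anf_expand f x, anf_expand f y, anf_expand f z, anf_expand f 0]
  rw [← Finset.sum_add_distrib, ← Finset.sum_add_distrib, ← Finset.sum_add_distrib,
    ← Finset.sum_add_distrib, ← Finset.sum_add_distrib, ← Finset.sum_add_distrib,
    ← Finset.sum_add_distrib]
  apply Finset.sum_eq_zero
  intro S _
  by_cases h : S.card ≤ 2
  · have hc := cube_mono S h x y z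
    calc bAnfCoeff f S * ∏ i ∈ S, (x+y+z) i + bAnfCoeff f S * ∏ i ∈ S, (x+y) i
          + bAnfCoeff f S * ∏ i ∈ S, (x+z) i + bAnfCoeff f S * ∏ i ∈ S, (y+z) i
          + bAnfCoeff f S * ∏ i ∈ S, x i + bAnfCoeff f S * ∏ i ∈ S, y i
          + bAnfCoeff f S * ∏ i ∈ S, z i + bAnfCoeff f S * ∏ i ∈ S, (0 : Fin m → ZMod 2) i
        = bAnfCoeff f S * ((∏ i ∈ S, (x+y+z) i) + (∏ i ∈ S, (x+y) i) + (∏ i ∈ S, (x+z) i)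
          + (∏ i ∈ S, (y+z) i) + (∏ i ∈ S, x i) + (∏ i ∈ S, y i) + (∏ i ∈ S, z i)
          + (∏ i ∈ S, (0 : Fin m → ZMod 2) i)) := by ring
      _ = 0 := by rw [hc, mul_zero]
  · rw [hdeg S (by omega)]; ring

lemma fourier_count {m : ℕ} (f : BF m) :
    bFourier f = (2 ^ m : ℤ) - 2 * (Finset.univ.filter (fun x => f x = 1)).card := by
  unfold bFourier
  rw [← Finset.sum_filter_add_sum_filter_not Finset.univ (fun x => f x = 1)]
  have h1 : ∀ x ∈ Finset.univ.filter (fun x => f x = 1), (-1 : ℤ) ^ (f x).val = -1 := by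
    intro x hx
    rw [(Finset.mem_filter.mp hx).2]
    decide
  have h2 : ∀ x ∈ Finset.univ.filter (fun x => ¬ f x = 1), (-1 : ℤ) ^ (f x).val = 1 := by
    intro x hx
    have := (Finset.mem_filter.mp hx).2
    have h0 : f x = 0 := (by decide : ∀ u : ZMod 2, u ≠ 1 → u = 0) _ this
    rw [h0]; decide
  rw [Finset.sum_congr rfl h1, Finset.sum_congr rfl h2]
  rw [Finset.sum_const, Finset.sum_const]
  have hcard := Finset.card_filter_add_card_filter_not (s := Finset.univ)
    (p := fun x => f x = 1)
  have huniv : (Finset.univ : Finset (Fin m → ZMod 2)).card = 2 ^ m := by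
    simp [Finset.card_univ]
  rw [huniv] at hcard
  set k := (Finset.univ.filter (fun x => f x = 1)).card
  set l := (Finset.univ.filter (fun x => ¬ f x = 1)).card
  simp only [nsmul_eq_mul, mul_neg, mul_one]
  have : (k : ℤ) + l = 2 ^ m := by exact_mod_cast hcard
  linarith

lemma fourier_sq {m : ℕ} (f : BF m) :
    bFourier f * bFourier f
      = ∑ a : Fin m → ZMod 2, ∑ x : Fin m → ZMod 2, (-1 : ℤ) ^ ((f (x + a) + f x).val) := by
  unfold bFourier
  rw [Finset.sum_mul]
  rw [← Finset.sum_comm]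
  apply Finset.sum_congr rfl
  intro x _
  rw [Finset.mul_sum]
  have := Fintype.sum_equiv (Equiv.addLeft x)
    (fun a => (-1 : ℤ) ^ ((f (x + a) + f x).val))
    (fun y => (-1 : ℤ) ^ ((f y + f x).val)) (fun a => rfl)
  rw [this]
  apply Finset.sum_congr rfl
  intro y _
  rw [neg_one_pow_add, mul_comm]

theorem stmt15 (m : ℕ) (f : BF m) (hq : bAlgDeg f = 2) :
    bBalanced f ↔ ¬ ∃ c : ZMod 2, ∀ a : Fin m → ZMod 2, bLinStruct f a → f a = c := by
  classical
  -- degree facts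
  have hne : Set.Nonempty {d | bDegLE f d} := by
    refine ⟨m, fun S hS => absurd hS ?_⟩
    have h1 := Finset.card_le_univ S
    simp only [Finset.card_univ, Fintype.card_fin] at h1
    omega
  have hdeg : bDegLE f 2 := by
    have hmem := Nat.sInf_mem hne
    unfold bAlgDeg at hq
    rwa [hq] at hmem
  have hm : 1 ≤ m := by
    by_contra h
    obtain rfl : m = 0 := by omega
    have h0 : bDegLE f 0 := by
      intro S hS
      have h1 := Finset.card_le_univ S
      simp only [Finset.card_univ, Fintype.card_fin] at h1
      omega
    have hz : bAlgDeg f = 0 := Nat.sInf_eq_zero.mpr (Or.inl h0)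
    rw [hq] at hz
    omega
  have h2pow : (2 : ℤ) ^ m = 2 * 2 ^ (m - 1) := by
    conv_lhs => rw [show m = (m - 1) + 1 from by omega]
    rw [pow_succ]; ring
  -- linear structure facts
  have h0ls : bLinStruct f 0 := ⟨0, fun x => by rw [add_zero]; exact zAddSelf _⟩
  have hconst : ∀ a, bLinStruct f a → ∀ x, f (x + a) + f x = f a + f 0 := by
    rintro a ⟨c, hc⟩ x
    have h0 := hc 0
    rw [zero_add] at h0
    rw [hc x]
    exact h0.symm
  have hcl : ∀ a b, bLinStruct f a → bLinStruct f b → bLinStruct f (a + b) := by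
    rintro a b ⟨ca, hca⟩ ⟨cb, hcb⟩
    refine ⟨ca + cb, fun x => ?_⟩
    have h1 : f (x + a + b) + f (x + a) = cb := hcb (x + a)
    have h2 : f (x + a) + f x = ca := hca x
    have e : x + (a + b) = x + a + b := (add_assoc x a b).symm
    rw [e]
    exact zComb _ _ _ _ _ h1 h2
  -- the main identity
  have hmain : bFourier f * bFourier f
      = 2 ^ m * ∑ a ∈ Finset.univ.filter (fun a => bLinStruct f a),
          (-1 : ℤ) ^ ((f a + f 0).val) := by
    rw [fourier_sq]
    rw [← Finset.sum_filter_add_sum_filter_not Finset.univ (fun a => bLinStruct f a)]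
    have hnot : ∑ a ∈ Finset.univ.filter (fun a => ¬ bLinStruct f a),
        (∑ x : Fin m → ZMod 2, (-1 : ℤ) ^ ((f (x + a) + f x).val)) = 0 := by
      apply Finset.sum_eq_zero
      intro a ha
      have hna := (Finset.mem_filter.mp ha).2
      have hex : ∃ x₀, f (x₀ + a) + f x₀ ≠ f a + f 0 := by
        by_contra hc; push_neg at hc; exact hna ⟨f a + f 0, hc⟩
      obtain ⟨x₀, hx₀⟩ := hex
      apply pair_sum_zero Finset.univ (fun x => f (x + a) + f x) x₀
        (fun _ _ => Finset.mem_univ _)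
      intro x _
      exact zFlip _ _ _ _ _ _ _ _ (deg2_cube f hdeg x x₀ a) hx₀
    have hin : ∑ a ∈ Finset.univ.filter (fun a => bLinStruct f a),
        (∑ x : Fin m → ZMod 2, (-1 : ℤ) ^ ((f (x + a) + f x).val))
        = 2 ^ m * ∑ a ∈ Finset.univ.filter (fun a => bLinStruct f a),
            (-1 : ℤ) ^ ((f a + f 0).val) := by
      rw [Finset.mul_sum]
      apply Finset.sum_congr rfl
      intro a ha
      have hls := (Finset.mem_filter.mp ha).2
      calc ∑ x : Fin m → ZMod 2, (-1 : ℤ) ^ ((f (x + a) + f x).val)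
          = ∑ _x : Fin m → ZMod 2, (-1 : ℤ) ^ ((f a + f 0).val) := by
            apply Finset.sum_congr rfl
            intro x _
            rw [hconst a hls x]
        _ = 2 ^ m * (-1 : ℤ) ^ ((f a + f 0).val) := by
            rw [Finset.sum_const]
            have huniv : (Finset.univ : Finset (Fin m → ZMod 2)).card = 2 ^ m := by
              simp [Finset.card_univ]
            rw [huniv, nsmul_eq_mul]
            push_cast
            ring
    rw [hnot, hin, add_zero]
  constructor
  · -- balanced → restriction not constant
    intro hb hex
    have hS0 : bFourier f = 0 := by
      rw [fourier_count f]
      unfold bBalanced at hb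
      rw [hb]
      push_cast
      linarith
    have hN0 : ∑ a ∈ Finset.univ.filter (fun a => bLinStruct f a),
        (-1 : ℤ) ^ ((f a + f 0).val) = 0 := by
      have h := hmain
      rw [hS0, mul_zero] at h
      rcases mul_eq_zero.mp h.symm with h' | h'
      · exact absurd h' (by positivity)
      · exact h'
    obtain ⟨c, hcst⟩ := hex
    have hf0 : f 0 = c := hcst 0 h0ls
    have hNcard : ∑ a ∈ Finset.univ.filter (fun a => bLinStruct f a),
        (-1 : ℤ) ^ ((f a + f 0).val)
        = ((Finset.univ.filter (fun a => bLinStruct f a)).card : ℤ) := by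
      have hall : ∀ a ∈ Finset.univ.filter (fun a => bLinStruct f a),
          (-1 : ℤ) ^ ((f a + f 0).val) = 1 := by
        intro a ha
        rw [hcst a (Finset.mem_filter.mp ha).2, hf0]
        exact zPowAddSelf _
      rw [Finset.sum_congr rfl hall, Finset.sum_const]
      simp
    rw [hNcard] at hN0
    have hpos : 0 < (Finset.univ.filter (fun a => bLinStruct f a)).card :=
      Finset.card_pos.mpr ⟨0, Finset.mem_filter.mpr ⟨Finset.mem_univ _, h0ls⟩⟩
    have : (Finset.univ.filter (fun a => bLinStruct f a)).card = 0 := by exact_mod_cast hN0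
    omega
  · -- restriction not constant → balanced
    intro hnc
    have hex : ∃ a₀, bLinStruct f a₀ ∧ f a₀ ≠ f 0 := by
      by_contra hc
      push_neg at hc
      exact hnc ⟨f 0, fun a hla => hc a hla⟩
    obtain ⟨a₀, hla₀, hne₀⟩ := hex
    have hN0 : ∑ a ∈ Finset.univ.filter (fun a => bLinStruct f a),
        (-1 : ℤ) ^ ((f a + f 0).val) = 0 := by
      apply pair_sum_zero _ (fun a => f a + f 0) a₀
      · intro a ha
        exact Finset.mem_filter.mpr ⟨Finset.mem_univ _,
          hcl a a₀ (Finset.mem_filter.mp ha).2 hla₀⟩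
      · intro a _
        have hv : f (a + a₀) + f a = f a₀ + f 0 := hconst a₀ hla₀ a
        exact zFlip2 _ _ _ _ hv hne₀
    have hS0 : bFourier f = 0 := by
      have h := hmain
      rw [hN0, mul_zero] at h
      exact mul_self_eq_zero.mp h
    rw [fourier_count f] at hS0
    unfold bBalanced
    have hk : ((Finset.univ.filter (fun x => f x = 1)).card : ℤ) = 2 ^ (m - 1) := by
      linarith
    exact_mod_cast hk
end

section
/- Let m be even and let F: F_2^m → F_2^m be a cubic APN function (every nonzero component has degree at most 3, with some component of degree 3). Then there exists a nonzero λ such that |Γ(F_λ)| ≥ 2^m − 2^{m-2} − 1, where Γ(f) = {a in F_2^m : D_a f is balanced}. -/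
open scoped Classical

namespace Stmt16Aux

open Finset

/-! ### The character `χ` -/

def chi (u : ZMod 2) : ℤ := (-1) ^ u.val

lemma chi_add (u v : ZMod 2) : chi (u + v) = chi u * chi v := by revert u v; decide

lemma chi_zero : chi 0 = 1 := rfl

lemma chi_add_one (u : ZMod 2) : chi (u + 1) = - chi u := by revert u; decide

lemma chi_values (u : ZMod 2) : chi u = 1 ∨ chi u = -1 := by revert u; decide

lemma chi_sum {ι : Type*} (s : Finset ι) (f : ι → ZMod 2) :
    chi (∑ i ∈ s, f i) = ∏ i ∈ s, chi (f i) := by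
  induction s using Finset.cons_induction with
  | empty => simp [chi]
  | cons a s ha ih => rw [Finset.sum_cons, Finset.prod_cons, chi_add, ih]

lemma bFourier_eq_chi {m : ℕ} (f : BF m) : bFourier f = ∑ x, chi (f x) := rfl

lemma fourier_card {m : ℕ} (f : BF m) :
    bFourier f = 2 ^ m - 2 * ((Finset.univ.filter (fun x => f x = 1)).card : ℤ) := by
  rw [bFourier_eq_chi]
  rw [← Finset.sum_filter_add_sum_filter_not Finset.univ (fun x => f x = 1)]
  have h1 : ∀ x ∈ Finset.univ.filter (fun x => f x = 1), chi (f x) = -1 := by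
    intro x hx
    rw [Finset.mem_filter] at hx
    rw [hx.2]; decide
  have h0 : ∀ x ∈ Finset.univ.filter (fun x => ¬ f x = 1), chi (f x) = 1 := by
    intro x hx
    rw [Finset.mem_filter] at hx
    have : f x = 0 := by
      have := hx.2; revert this; generalize f x = u; revert u; decide
    rw [this]; rfl
  rw [Finset.sum_congr rfl h1, Finset.sum_congr rfl h0]
  simp only [Finset.sum_const, nsmul_eq_mul, mul_one, mul_neg_one]
  have hcards := Finset.card_filter_add_card_filter_not
    (s := (Finset.univ : Finset (Fin m → ZMod 2))) (p := fun x => f x = 1)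
  have hcard : (Finset.univ : Finset (Fin m → ZMod 2)).card = 2 ^ m := by
    simp [Fintype.card_fun]
  rw [hcard] at hcards
  have : ((Finset.univ.filter (fun a => ¬ f a = 1)).card : ℤ)
      = 2 ^ m - ((Finset.univ.filter (fun x => f x = 1)).card : ℤ) := by
    have h := congrArg (Nat.cast : ℕ → ℤ) hcards
    push_cast at h
    linarith
  rw [this]; ring

lemma balanced_of_fourier_zero {m : ℕ} (hm : 1 ≤ m) (f : BF m) (h : bFourier f = 0) :
    bBalanced f := by
  have := fourier_card f
  rw [h] at this
  have h2 : (2:ℤ) * ((Finset.univ.filter (fun x => f x = 1)).card : ℤ) = 2 ^ m := by linarith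
  have hpow : (2:ℕ) ^ m = 2 * 2 ^ (m - 1) := by
    conv_lhs => rw [show m = (m-1) + 1 by omega]
    ring
  have : (2:ℕ) * (Finset.univ.filter (fun x => f x = 1)).card = 2 ^ m := by
    exact_mod_cast h2
  unfold bBalanced
  omega


/-! ### ANF inversion and degree machinery -/

variable {m : ℕ}

lemma delta_prod (x y : Fin m → ZMod 2) :
    (∏ i, (x i + (1 + y i))) = if x = y then (1 : ZMod 2) else 0 := by
  by_cases h : x = y
  · subst h
    rw [if_pos rfl]
    apply Finset.prod_eq_one
    intro i _
    have h2 : ∀ u : ZMod 2, u + (1 + u) = 1 := by decide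
    exact h2 (x i)
  · rw [if_neg h]
    have h3 : ∃ i, x i ≠ y i := by
      by_contra hc; push_neg at hc; exact h (funext hc)
    obtain ⟨i, hi⟩ := h3
    apply Finset.prod_eq_zero (Finset.mem_univ i)
    revert hi; generalize x i = u; generalize y i = v; revert u v; decide

lemma anf_inversion (f : BF m) (x : Fin m → ZMod 2) :
    f x = ∑ S : Finset (Fin m), bAnfCoeff f S * ∏ i ∈ S, x i := by
  unfold bAnfCoeff
  have step1 :
      (∑ S : Finset (Fin m), (∑ y : Fin m → ZMod 2, (∏ i ∈ Sᶜ, (1 + y i)) * f y) * ∏ i ∈ S, x i)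
      = ∑ y : Fin m → ZMod 2,
          (∑ S : Finset (Fin m), (∏ i ∈ S, x i) * ∏ i ∈ Sᶜ, (1 + y i)) * f y := by
    simp_rw [Finset.sum_mul]
    rw [Finset.sum_comm]
    apply Finset.sum_congr rfl
    intro y _
    apply Finset.sum_congr rfl
    intro S _
    ring
  rw [step1]
  have step2 : ∀ y : Fin m → ZMod 2,
      (∑ S : Finset (Fin m), (∏ i ∈ S, x i) * ∏ i ∈ Sᶜ, (1 + y i))
        = if x = y then (1:ZMod 2) else 0 := by
    intro y
    have e : ∀ S : Finset (Fin m), (∏ i ∈ Sᶜ, (1 + y i)) = ∏ i ∈ Finset.univ \ S, (1 + y i) :=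
      fun S => by rw [Finset.compl_eq_univ_sdiff]
    calc (∑ S : Finset (Fin m), (∏ i ∈ S, x i) * ∏ i ∈ Sᶜ, (1 + y i))
        = ∑ S ∈ Finset.univ.powerset, (∏ i ∈ S, x i) * ∏ i ∈ Finset.univ \ S, (1 + y i) := by
          rw [Finset.powerset_univ]
          exact Finset.sum_congr rfl (fun S _ => by rw [e])
      _ = ∏ i, (x i + (1 + y i)) := (Finset.prod_add _ _ _).symm
      _ = if x = y then 1 else 0 := delta_prod x y
  simp_rw [step2]
  simp [Finset.sum_ite_eq]

def MonSet (m d : ℕ) : Set (BF m) :=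
  {g | ∃ S : Finset (Fin m), S.card ≤ d ∧ g = fun x => ∏ i ∈ S, x i}

def Msub (m d : ℕ) : Submodule (ZMod 2) (BF m) := Submodule.span (ZMod 2) (MonSet m d)

lemma mem_Msub_of_degLE {d : ℕ} {f : BF m} (hf : bDegLE f d) : f ∈ Msub m d := by
  have hrep : f = ∑ S ∈ Finset.univ.filter (fun S : Finset (Fin m) => S.card ≤ d),
      bAnfCoeff f S • (fun x => ∏ i ∈ S, x i : BF m) := by
    funext x
    rw [Finset.sum_apply]
    have e1 : ∀ S ∈ Finset.univ.filter (fun S : Finset (Fin m) => S.card ≤ d),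
        (bAnfCoeff f S • (fun x => ∏ i ∈ S, x i : BF m)) x = bAnfCoeff f S * ∏ i ∈ S, x i :=
      fun S _ => rfl
    rw [Finset.sum_congr rfl e1]
    rw [anf_inversion f x,
      ← Finset.sum_filter_add_sum_filter_not Finset.univ
        (fun S : Finset (Fin m) => S.card ≤ d) (fun S => bAnfCoeff f S * ∏ i ∈ S, x i)]
    have hz : (∑ S ∈ Finset.univ.filter (fun S : Finset (Fin m) => ¬ S.card ≤ d),
        bAnfCoeff f S * ∏ i ∈ S, x i) = 0 := by
      apply Finset.sum_eq_zero
      intro S hS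
      rw [Finset.mem_filter] at hS
      rw [hf S (by omega : d < S.card), zero_mul]
    rw [hz, add_zero]
  rw [hrep]
  apply Submodule.sum_mem
  intro S hS
  rw [Finset.mem_filter] at hS
  exact Submodule.smul_mem _ _ (Submodule.subset_span ⟨S, hS.2, rfl⟩)

lemma bDeriv_add (a : Fin m → ZMod 2) (f g : BF m) :
    bDeriv a (f + g) = bDeriv a f + bDeriv a g := by
  funext x; simp [bDeriv]; ring

lemma bDeriv_smul (a : Fin m → ZMod 2) (c : ZMod 2) (f : BF m) :
    bDeriv a (c • f) = c • bDeriv a f := by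
  funext x; simp [bDeriv, smul_eq_mul]; ring

lemma bDeriv_zero (a : Fin m → ZMod 2) : bDeriv a (0 : BF m) = 0 := by
  funext x; simp [bDeriv]

lemma bDeriv_mem_Msub {d : ℕ} (a : Fin m → ZMod 2) {f : BF m} (hf : f ∈ Msub m (d+1)) :
    bDeriv a f ∈ Msub m d := by
  induction hf using Submodule.span_induction with
  | mem g hg =>
      obtain ⟨S, hSd, rfl⟩ := hg
      have key : bDeriv a (fun x => ∏ i ∈ S, x i)
          = ∑ t ∈ S.powerset.erase S,
              (∏ i ∈ S \ t, a i) • (fun x => ∏ i ∈ t, x i : BF m) := by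
        funext x
        rw [Finset.sum_apply]
        show (∏ i ∈ S, (x + a) i) + ∏ i ∈ S, x i = _
        have hp : (∏ i ∈ S, (x + a) i) = ∑ t ∈ S.powerset, (∏ i ∈ t, x i) * ∏ i ∈ S \ t, a i :=
          Finset.prod_add (fun i => x i) (fun i => a i) S
        rw [hp, ← Finset.add_sum_erase _ _ (Finset.mem_powerset_self S)]
        simp only [Finset.sdiff_self, Finset.prod_empty, mul_one]
        rw [add_comm (∏ i ∈ S, x i) _, add_assoc, CharTwo.add_self_eq_zero, add_zero]
        apply Finset.sum_congr rfl
        intro t _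
        simp [smul_eq_mul, mul_comm]
      rw [key]
      apply Submodule.sum_mem
      intro t ht
      rw [Finset.mem_erase, Finset.mem_powerset] at ht
      have htc : t.card ≤ d := by
        have : t ⊂ S := ssubset_of_ne_of_subset ht.1 ht.2
        have := Finset.card_lt_card this
        omega
      exact Submodule.smul_mem _ _ (Submodule.subset_span ⟨t, htc, rfl⟩)
  | zero => rw [bDeriv_zero]; exact Submodule.zero_mem _
  | add f g hf hg ihf ihg => rw [bDeriv_add]; exact Submodule.add_mem _ ihf ihg
  | smul c f hf ih => rw [bDeriv_smul]; exact Submodule.smul_mem _ _ ih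

def ConstSub (m : ℕ) : Submodule (ZMod 2) (BF m) where
  carrier := {f | ∃ c, ∀ x, f x = c}
  add_mem' := by rintro f g ⟨c, hc⟩ ⟨c', hc'⟩; exact ⟨c + c', fun x => by simp [hc, hc']⟩
  zero_mem' := ⟨0, fun _ => rfl⟩
  smul_mem' := by rintro r f ⟨c, hc⟩; exact ⟨r * c, fun x => by simp [hc, smul_eq_mul]⟩

lemma const_of_Msub_zero {f : BF m} (hf : f ∈ Msub m 0) : ∃ c, ∀ x, f x = c := by
  have hle : Msub m 0 ≤ ConstSub m := by
    rw [Msub, Submodule.span_le]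
    rintro g ⟨S, hS, rfl⟩
    have : S = ∅ := Finset.card_eq_zero.mp (Nat.le_zero.mp hS)
    subst this
    exact ⟨1, fun x => by simp⟩
  exact hle hf

/-! ### Affine dichotomy, Fourier square identity, quadratic bound -/

lemma card_univ_bf : (Finset.univ : Finset (Fin m → ZMod 2)).card = 2 ^ m := by
  simp [Fintype.card_fun]

lemma fourier_const (e : ZMod 2) (h : BF m) (hh : ∀ x, h x = e) :
    bFourier h = chi e * 2 ^ m := by
  rw [bFourier_eq_chi, Finset.sum_congr rfl (fun x _ => by rw [hh x]),
    Finset.sum_const, card_univ_bf]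
  simp [nsmul_eq_mul, mul_comm]

lemma affine_dichotomy (h : BF m) (H : ∀ c : Fin m → ZMod 2, ∃ k, ∀ x, h (x + c) + h x = k) :
    bFourier h = 0 ∨ ∃ e, ∀ x, h x = e := by
  by_cases hc : ∃ e, ∀ x, h x = e
  · exact Or.inr hc
  · left
    push_neg at hc
    obtain ⟨x0, hx0⟩ := hc (h 0)
    obtain ⟨k, hk⟩ := H x0
    have e1 : h x0 + h 0 = k := by have := hk 0; rwa [zero_add] at this
    have hk1 : k = 1 := by
      have key : ∀ u v w : ZMod 2, u + v = w → u ≠ v → w = 1 := by decide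
      exact key _ _ _ e1 hx0
    subst hk1
    have hflip : ∀ x, h (x + x0) = h x + 1 := by
      intro x
      have := hk x
      revert this
      generalize h (x + x0) = u; generalize h x = v
      revert u v; decide
    have hneg : bFourier h = - bFourier h := by
      rw [bFourier_eq_chi]
      calc (∑ x, chi (h x)) = ∑ x, chi (h (x + x0)) := by
            exact (Fintype.sum_equiv (Equiv.addRight x0)
              (fun x => chi (h (x + x0))) (fun y => chi (h y)) (fun x => by simp)).symm
        _ = ∑ x, - chi (h x) := by
            exact Finset.sum_congr rfl (fun x _ => by rw [hflip, chi_add_one])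
        _ = - ∑ x, chi (h x) := by rw [Finset.sum_neg_distrib]
    linarith

lemma fourier_sq (g : BF m) :
    (bFourier g) ^ 2 = ∑ b : Fin m → ZMod 2, bFourier (bDeriv b g) := by
  rw [bFourier_eq_chi, sq, Finset.sum_mul_sum]
  calc (∑ x : Fin m → ZMod 2, ∑ y : Fin m → ZMod 2, chi (g x) * chi (g y))
      = ∑ x : Fin m → ZMod 2, ∑ b : Fin m → ZMod 2, chi (g (x + b) + g x) := by
        apply Finset.sum_congr rfl
        intro x _
        calc (∑ y : Fin m → ZMod 2, chi (g x) * chi (g y))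
            = ∑ y : Fin m → ZMod 2, chi (g x + g y) := by
              exact Finset.sum_congr rfl (fun y _ => (chi_add _ _).symm)
          _ = ∑ b : Fin m → ZMod 2, chi (g x + g (x + b)) := by
              exact (Fintype.sum_equiv (Equiv.addLeft x)
                (fun b => chi (g x + g (x + b))) (fun y => chi (g x + g y))
                (fun b => by simp)).symm
          _ = ∑ b : Fin m → ZMod 2, chi (g (x + b) + g x) := by
              exact Finset.sum_congr rfl (fun b _ => by rw [add_comm (g x)])
    _ = ∑ b : Fin m → ZMod 2, ∑ x : Fin m → ZMod 2, chi (g (x + b) + g x) := Finset.sum_comm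
    _ = ∑ b : Fin m → ZMod 2, bFourier (bDeriv b g) := rfl

lemma two2 : ∀ u : ZMod 2, u + u = 0 := by decide

lemma two2' (u : Fin m → ZMod 2) : u + u = 0 := by
  funext i
  exact two2 (u i)

lemma negfun (b : Fin m → ZMod 2) : -b = b := by
  funext i
  have h : ∀ u : ZMod 2, -u = u := by decide
  exact h (b i)

lemma quad_bound (hm : Even m) (g : BF m) (hg : g ∈ Msub m 2)
    (a0 : Fin m → ZMod 2) (ha0 : a0 ≠ 0) (hper : ∀ x, g (x + a0) = g x) :
    bFourier g = 0 ∨ (2:ℤ) ^ (m + 2) ≤ (bFourier g) ^ 2 := by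
  classical
  set P : (Fin m → ZMod 2) → Prop := fun b => ∀ x, g (x + b) + g x = g b + g 0 with hP
  -- second derivatives are constant, so each D_b g is balanced or constant
  have hdich : ∀ b, bFourier (bDeriv b g) = 0 ∨ ∃ e, ∀ x, bDeriv b g x = e := by
    intro b
    apply affine_dichotomy
    intro c
    obtain ⟨k, hk⟩ := const_of_Msub_zero (bDeriv_mem_Msub c (bDeriv_mem_Msub b hg))
    exact ⟨k, fun x => hk x⟩
  have hP0 : P 0 := by
    intro x
    rw [add_zero]
    exact (two2 (g x)).trans (two2 (g 0)).symm
  have hPadd : ∀ b b', P b → P b' → P (b + b') := by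
    intro b b' hb hb' x
    have A := hb (x + b')
    have B := hb' x
    have C := hb b'
    rw [show x + b' + b = x + (b + b') by ring] at A
    rw [show b' + b = b + b' by ring] at C
    revert A B C
    generalize g (x + (b + b')) = u1
    generalize g (x + b') = u2
    generalize g x = u3
    generalize g b = u4
    generalize g 0 = u5
    generalize g b' = u6
    generalize g (b + b') = u7
    revert u1 u2 u3 u4 u5 u6 u7; decide
  have hCadd : ∀ b b', P b → P b' → g (b + b') + g 0 = (g b + g 0) + (g b' + g 0) := by
    intro b b' hb hb'
    have C := hb b'
    rw [show b' + b = b + b' by ring] at C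
    revert C
    generalize g (b + b') = u1
    generalize g b' = u2
    generalize g b = u3
    generalize g 0 = u4
    revert u1 u2 u3 u4; decide
  have hPa0 : P a0 := by
    intro x
    rw [hper x]
    have ga0 : g a0 = g 0 := by have := hper 0; rwa [zero_add] at this
    rw [ga0]
    exact (two2 (g x)).trans (two2 (g 0)).symm
  set LSf : Finset (Fin m → ZMod 2) := Finset.univ.filter P with hLSf
  -- the Fourier square as a sum over LSf
  have hsplit : (bFourier g) ^ 2 = (∑ b ∈ LSf, chi (g b + g 0)) * 2 ^ m := by
    rw [fourier_sq g]
    rw [← Finset.sum_subset (Finset.subset_univ LSf) ?van]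
    case van =>
      intro b _ hb
      rcases hdich b with h0 | ⟨e, he⟩
      · exact h0
      · exfalso
        apply hb
        rw [hLSf, Finset.mem_filter]
        refine ⟨Finset.mem_univ b, ?_⟩
        have heb : e = g b + g 0 := by
          have := he 0
          rw [show bDeriv b g 0 = g b + g 0 from by rw [bDeriv, zero_add]] at this
          exact this.symm
        intro x
        rw [← heb]
        exact he x
    have hterm : ∀ b ∈ LSf, bFourier (bDeriv b g) = chi (g b + g 0) * 2 ^ m := by
      intro b hb
      rw [hLSf, Finset.mem_filter] at hb
      exact fourier_const _ _ (fun x => hb.2 x)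
    rw [Finset.sum_congr rfl hterm, ← Finset.sum_mul]
  by_cases hall : ∀ b ∈ LSf, g b + g 0 = 0
  · -- all constants are 0 : Fourier square is 2^m * |LSf|, a large power of two
    right
    have hsum1 : (∑ b ∈ LSf, chi (g b + g 0)) = (LSf.card : ℤ) := by
      rw [Finset.sum_congr rfl (fun b hb => by rw [hall b hb, chi_zero])]
      simp
    rw [hsum1] at hsplit
    -- LSf.card is a power of two
    set N : AddSubgroup (Fin m → ZMod 2) := {
      carrier := {b | P b}
      zero_mem' := hP0
      add_mem' := fun hb hb' => hPadd _ _ hb hb'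
      neg_mem' := by intro b hb; rw [negfun]; exact hb } with hN
    have hcardN : Nat.card N = LSf.card := by
      have e : ↥N ≃ {b // P b} := Equiv.subtypeEquivRight (fun b => Iff.rfl)
      rw [Nat.card_congr e, Nat.card_eq_fintype_card, Fintype.card_subtype, hLSf]
    have hdvd : Nat.card N ∣ 2 ^ m := by
      have := AddSubgroup.card_addSubgroup_dvd_card N
      rwa [Nat.card_eq_fintype_card (α := Fin m → ZMod 2), ← Finset.card_univ, card_univ_bf]
        at this
    obtain ⟨k, hkm, hk⟩ := (Nat.dvd_prime_pow Nat.prime_two).mp (hcardN ▸ hdvd)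
    -- 0 and a0 are both in LSf, so LSf.card ≥ 2, so k ≥ 1
    have h2le : 2 ≤ LSf.card := by
      apply Finset.one_lt_card.mpr
      refine ⟨0, ?_, a0, ?_, fun h => ha0 h.symm⟩
      · rw [hLSf, Finset.mem_filter]; exact ⟨Finset.mem_univ _, hP0⟩
      · rw [hLSf, Finset.mem_filter]; exact ⟨Finset.mem_univ _, hPa0⟩
    have hk1 : 1 ≤ k := by
      by_contra hcon
      interval_cases k
      · rw [hk] at h2le; omega
    -- parity : m + k is even, so k ≥ 2
    have hFsq : (bFourier g) ^ 2 = 2 ^ (k + m) := by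
      rw [hsplit, hk]
      push_cast
      rw [pow_add]
    have hkeven : Even k := by
      have hnat : (bFourier g).natAbs ^ 2 = 2 ^ (k + m) := by
        have : ((bFourier g).natAbs : ℤ) ^ 2 = ((2:ℕ) ^ (k + m) : ℤ) := by
          rw [← Int.abs_eq_natAbs, sq_abs]
          push_cast
          exact hFsq
        exact_mod_cast this
      have hdvd2 : (bFourier g).natAbs ∣ 2 ^ (k + m) := by
        rw [← hnat]; exact dvd_pow_self _ two_ne_zero
      obtain ⟨t, htle, ht⟩ := (Nat.dvd_prime_pow Nat.prime_two).mp hdvd2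
      rw [ht, ← pow_mul] at hnat
      have : t * 2 = k + m := Nat.pow_right_injective (le_refl 2) hnat
      have hmk : Even (k + m) := ⟨t, by omega⟩
      rcases hm with ⟨p, hp⟩
      rcases hmk with ⟨q, hq⟩
      exact ⟨q - p, by omega⟩
    have hk2 : 2 ≤ k := by
      rcases hkeven with ⟨p, hp⟩
      omega
    rw [hFsq]
    exact pow_le_pow_right₀ (by norm_num) (by omega)
  · -- some constant is 1 : the sum telescopes to 0
    left
    push_neg at hall
    obtain ⟨b0, hb0mem, hb0⟩ := hall
    have hb0P : P b0 := by
      rw [hLSf, Finset.mem_filter] at hb0mem; exact hb0mem.2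
    have hb0v : g b0 + g 0 = 1 := by
      revert hb0; generalize g b0 + g 0 = u; revert u; decide
    have hSzero : (∑ b ∈ LSf, chi (g b + g 0)) = 0 := by
      have hSneg : (∑ b ∈ LSf, chi (g b + g 0)) = - ∑ b ∈ LSf, chi (g b + g 0) := by
        have hmemmap : ∀ b ∈ LSf, b + b0 ∈ LSf := by
          intro b hb
          rw [hLSf, Finset.mem_filter] at hb ⊢
          exact ⟨Finset.mem_univ _, hPadd _ _ hb.2 hb0P⟩
        calc (∑ b ∈ LSf, chi (g b + g 0))
            = ∑ b ∈ LSf, chi (g (b + b0) + g 0) := by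
              apply Finset.sum_nbij' (fun b => b + b0) (fun b => b + b0)
                hmemmap hmemmap
              · intro b _; rw [add_assoc, two2' b0, add_zero]
              · intro b _; rw [add_assoc, two2' b0, add_zero]
              · intro b _; rw [add_assoc, two2' b0, add_zero]
          _ = ∑ b ∈ LSf, chi ((g b + g 0) + 1) := by
              apply Finset.sum_congr rfl
              intro b hb
              rw [hLSf, Finset.mem_filter] at hb
              rw [hCadd b b0 hb.2 hb0P, hb0v]
          _ = - ∑ b ∈ LSf, chi (g b + g 0) := by
              rw [Finset.sum_congr rfl (fun b _ => chi_add_one _), Finset.sum_neg_distrib]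
      linarith
    have hF2 : (bFourier g) ^ 2 = 0 := by rw [hsplit, hSzero, zero_mul]
    exact sq_eq_zero_iff.mp hF2

/-! ### APN Fourier sum bound -/

lemma chi_pair (a : ZMod 2) : (∑ t : ZMod 2, chi (t * a)) = if a = 0 then 2 else 0 := by
  revert a; decide

lemma sum_chi_dot (w : Fin m → ZMod 2) :
    (∑ lam : Fin m → ZMod 2, chi (∑ i, lam i * w i)) = if w = 0 then (2:ℤ) ^ m else 0 := by
  rw [Finset.sum_congr rfl (fun lam _ => chi_sum Finset.univ (fun i => lam i * w i))]
  have h2 : (∑ lam : Fin m → ZMod 2, ∏ i, chi (lam i * w i))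
      = ∑ lam ∈ Fintype.piFinset (fun _ : Fin m => (Finset.univ : Finset (ZMod 2))),
          ∏ i, chi (lam i * w i) := by rw [Fintype.piFinset_univ]
  rw [h2, ← Finset.prod_univ_sum (fun _ : Fin m => (Finset.univ : Finset (ZMod 2)))
    (fun i t => chi (t * w i))]
  by_cases hw : w = 0
  · rw [if_pos hw]
    subst hw
    calc (∏ i : Fin m, ∑ t : ZMod 2, chi (t * (0 : Fin m → ZMod 2) i))
        = ∏ _i : Fin m, (2:ℤ) := by
          apply Finset.prod_congr rfl
          intro i _
          rw [show ((0 : Fin m → ZMod 2) i) = 0 from rfl, chi_pair, if_pos rfl]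
      _ = 2 ^ m := by rw [Finset.prod_const, Finset.card_univ, Fintype.card_fin]
  · rw [if_neg hw]
    have hex : ∃ i, w i ≠ 0 := by
      by_contra hc; push_neg at hc; exact hw (funext hc)
    obtain ⟨i, hi⟩ := hex
    apply Finset.prod_eq_zero (Finset.mem_univ i)
    rw [chi_pair, if_neg hi]

lemma deriv_comp_eq (F : VBF m) (a lam x : Fin m → ZMod 2) :
    bDeriv a (bComp lam F) x = ∑ i, lam i * (F (x + a) i + F x i) := by
  unfold bDeriv bComp
  rw [← Finset.sum_add_distrib]
  apply Finset.sum_congr rfl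
  intro i _
  ring

lemma apn_sum (F : VBF m) (hF : bIsAPN F) (a : Fin m → ZMod 2) (ha : a ≠ 0) :
    (∑ lam : Fin m → ZMod 2, (bFourier (bDeriv a (bComp lam F)))^2) ≤ 2 ^ (2*m+1) := by
  classical
  have hW : ∀ lam, bFourier (bDeriv a (bComp lam F))
      = ∑ x : Fin m → ZMod 2, chi (∑ i, lam i * (F (x + a) i + F x i)) := by
    intro lam
    rw [bFourier_eq_chi]
    exact Finset.sum_congr rfl (fun x _ => congrArg chi (deriv_comp_eq F a lam x))
  have hsq : ∀ lam : Fin m → ZMod 2, (bFourier (bDeriv a (bComp lam F)))^2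
      = ∑ x : Fin m → ZMod 2, ∑ y : Fin m → ZMod 2,
          chi (∑ i, lam i * ((F (x + a) i + F x i) + (F (y + a) i + F y i))) := by
    intro lam
    rw [hW, sq, Finset.sum_mul_sum]
    apply Finset.sum_congr rfl; intro x _
    apply Finset.sum_congr rfl; intro y _
    rw [← chi_add, ← Finset.sum_add_distrib]
    congr 1
    apply Finset.sum_congr rfl; intro i _
    ring
  rw [Finset.sum_congr rfl (fun lam _ => hsq lam), Finset.sum_comm]
  have hswap2 : ∀ x : Fin m → ZMod 2,
      (∑ lam : Fin m → ZMod 2, ∑ y : Fin m → ZMod 2,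
        chi (∑ i, lam i * ((F (x + a) i + F x i) + (F (y + a) i + F y i))))
      = ∑ y : Fin m → ZMod 2, ∑ lam : Fin m → ZMod 2,
        chi (∑ i, lam i * ((F (x + a) i + F x i) + (F (y + a) i + F y i))) :=
    fun x => Finset.sum_comm
  rw [Finset.sum_congr rfl (fun x _ => hswap2 x)]
  have hinner : ∀ x y : Fin m → ZMod 2,
      (∑ lam : Fin m → ZMod 2,
        chi (∑ i, lam i * ((F (x + a) i + F x i) + (F (y + a) i + F y i))))
      = if (F (x + a) + F x) + (F (y + a) + F y) = 0 then (2:ℤ)^m else 0 := by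
    intro x y
    rw [show (∑ lam : Fin m → ZMod 2,
        chi (∑ i, lam i * ((F (x + a) i + F x i) + (F (y + a) i + F y i))))
      = ∑ lam : Fin m → ZMod 2,
        chi (∑ i, lam i * ((F (x + a) + F x) + (F (y + a) + F y)) i) from rfl]
    exact sum_chi_dot _
  rw [Finset.sum_congr rfl (fun x _ => Finset.sum_congr rfl (fun y _ => hinner x y))]
  have hiff : ∀ x y : Fin m → ZMod 2,
      ((F (x + a) + F x) + (F (y + a) + F y) = 0) ↔ (F (y + a) + F y = F (x + a) + F x) := by
    intro x y
    constructor
    · intro h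
      funext i
      have hi := congrFun h i
      have key : ∀ u t : ZMod 2, u + t = 0 → t = u := by decide
      exact key _ _ hi
    · intro h; rw [h]; exact two2' _
  have hx : ∀ x : Fin m → ZMod 2,
      (∑ y : Fin m → ZMod 2,
        (if (F (x + a) + F x) + (F (y + a) + F y) = 0 then (2:ℤ)^m else 0)) ≤ 2 * 2^m := by
    intro x
    rw [Finset.sum_congr rfl (fun y _ => by rw [if_congr (hiff x y) rfl rfl])]
    rw [← Finset.sum_filter, Finset.sum_const, nsmul_eq_mul]
    have hcard := hF a ha (F (x + a) + F x)
    have : ((Finset.univ.filter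
        (fun y => F (y + a) + F y = F (x + a) + F x)).card : ℤ) ≤ 2 := by
      exact_mod_cast hcard
    have hnn : (0:ℤ) ≤ 2^m := by positivity
    nlinarith
  calc (∑ x : Fin m → ZMod 2, ∑ y : Fin m → ZMod 2,
        (if (F (x + a) + F x) + (F (y + a) + F y) = 0 then (2:ℤ)^m else 0))
      ≤ ∑ _x : Fin m → ZMod 2, 2 * 2^m := Finset.sum_le_sum (fun x _ => hx x)
    _ = 2 ^ (2*m+1) := by
        rw [Finset.sum_const, card_univ_bf, nsmul_eq_mul]
        push_cast
        rw [show 2*m+1 = m + m + 1 by ring]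
        rw [pow_add, pow_add, pow_one]
        ring

lemma bad_count (hm : Even m) (hm2 : 2 ≤ m) (F : VBF m) (hF : bIsAPN F)
    (hdeg : ∀ lam : Fin m → ZMod 2, lam ≠ 0 → bDegLE (bComp lam F) 3)
    (a : Fin m → ZMod 2) (ha : a ≠ 0) :
    ((Finset.univ.filter (fun lam : Fin m → ZMod 2 =>
        lam ≠ 0 ∧ bFourier (bDeriv a (bComp lam F)) ≠ 0)).card) ≤ 2 ^ (m - 2) := by
  classical
  have hbig : ∀ lam : Fin m → ZMod 2, lam ≠ 0 →
      bFourier (bDeriv a (bComp lam F)) ≠ 0 →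
      (2:ℤ)^(m+2) ≤ (bFourier (bDeriv a (bComp lam F)))^2 := by
    intro lam hlam hW0
    have hg2 : bDeriv a (bComp lam F) ∈ Msub m 2 :=
      bDeriv_mem_Msub a (mem_Msub_of_degLE (hdeg lam hlam))
    have hper : ∀ x, bDeriv a (bComp lam F) (x + a) = bDeriv a (bComp lam F) x := by
      intro x
      show bComp lam F (x + a + a) + bComp lam F (x + a)
          = bComp lam F (x + a) + bComp lam F x
      rw [add_assoc, two2' a, add_zero]
      exact add_comm _ _
    rcases quad_bound hm _ hg2 a ha hper with h0 | hge
    · exact absurd h0 hW0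
    · exact hge
  have hTbound : ((Finset.univ.filter (fun lam : Fin m → ZMod 2 =>
      lam ≠ 0 ∧ bFourier (bDeriv a (bComp lam F)) ≠ 0)).card : ℤ) * 2^(m+2)
      ≤ ∑ lam ∈ Finset.univ.filter (fun lam : Fin m → ZMod 2 =>
          lam ≠ 0 ∧ bFourier (bDeriv a (bComp lam F)) ≠ 0),
            (bFourier (bDeriv a (bComp lam F)))^2 := by
    have := Finset.card_nsmul_le_sum
      (Finset.univ.filter (fun lam : Fin m → ZMod 2 =>
        lam ≠ 0 ∧ bFourier (bDeriv a (bComp lam F)) ≠ 0))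
      (fun lam => (bFourier (bDeriv a (bComp lam F)))^2) ((2:ℤ)^(m+2))
      (fun lam hl => by
        rw [Finset.mem_filter] at hl
        exact hbig lam hl.2.1 hl.2.2)
    rwa [nsmul_eq_mul] at this
  have hsub : (∑ lam ∈ Finset.univ.filter (fun lam : Fin m → ZMod 2 =>
      lam ≠ 0 ∧ bFourier (bDeriv a (bComp lam F)) ≠ 0),
        (bFourier (bDeriv a (bComp lam F)))^2)
      ≤ ∑ lam ∈ Finset.univ.erase (0 : Fin m → ZMod 2),
          (bFourier (bDeriv a (bComp lam F)))^2 := by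
    apply Finset.sum_le_sum_of_subset_of_nonneg
    · intro lam hl
      rw [Finset.mem_filter] at hl
      exact Finset.mem_erase.mpr ⟨hl.2.1, Finset.mem_univ _⟩
    · intro lam _ _; positivity
  have hW0 : bFourier (bDeriv a (bComp (0 : Fin m → ZMod 2) F)) = 2 ^ m := by
    have hcomp : bComp (0 : Fin m → ZMod 2) F = (fun _ => 0 : BF m) := by
      funext x; unfold bComp; simp
    rw [hcomp]
    have hz : bDeriv a (fun _ => 0 : BF m) = (fun _ => 0) := by
      funext x; simp [bDeriv]
    rw [hz, fourier_const 0 _ (fun _ => rfl), chi_zero, one_mul]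
  have herase : (∑ lam ∈ Finset.univ.erase (0 : Fin m → ZMod 2),
      (bFourier (bDeriv a (bComp lam F)))^2)
      = (∑ lam : Fin m → ZMod 2, (bFourier (bDeriv a (bComp lam F)))^2) - 2^(2*m) := by
    have hh := Finset.add_sum_erase Finset.univ
      (fun lam : Fin m → ZMod 2 => (bFourier (bDeriv a (bComp lam F)))^2)
      (Finset.mem_univ (0 : Fin m → ZMod 2))
    simp only [hW0] at hh
    have h2 : ((2:ℤ)^m)^2 = 2^(2*m) := by rw [← pow_mul]; ring_nf
    linarith [hh, h2]
  have hle := apn_sum F hF a ha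
  have hfinal : ((Finset.univ.filter (fun lam : Fin m → ZMod 2 =>
      lam ≠ 0 ∧ bFourier (bDeriv a (bComp lam F)) ≠ 0)).card : ℤ) * 2^(m+2) ≤ 2^(2*m) := by
    have h2 : (2:ℤ)^(2*m+1) - 2^(2*m) = 2^(2*m) := by rw [pow_succ]; ring
    linarith
  have hpow : (2:ℤ)^(2*m) = 2^(m-2) * 2^(m+2) := by
    rw [← pow_add]
    congr 1
    omega
  rw [hpow] at hfinal
  have := le_of_mul_le_mul_right hfinal (by positivity : (0:ℤ) < 2^(m+2))
  exact_mod_cast this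

end Stmt16Aux

theorem stmt16 (m : ℕ) (hm : Even m) (F : VBF m) (hF : bIsAPN F)
    (hdeg : ∀ lam : Fin m → ZMod 2, lam ≠ 0 → bDegLE (bComp lam F) 3)
    (hcubic : ∃ lam : Fin m → ZMod 2, lam ≠ 0 ∧ bAlgDeg (bComp lam F) = 3) :
    ∃ lam : Fin m → ZMod 2, lam ≠ 0 ∧
      2 ^ m - 2 ^ (m - 2) - 1 ≤ (bGamma (bComp lam F)).card := by
  classical
  obtain ⟨lam0, hlam0, _⟩ := hcubic
  have hm1 : 1 ≤ m := by
    by_contra h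
    push_neg at h
    interval_cases m
    exact hlam0 (funext (fun i => i.elim0))
  have hm2 : 2 ≤ m := by
    rcases hm with ⟨p, hp⟩
    omega
  set S := Finset.univ.filter (fun lam : Fin m → ZMod 2 => lam ≠ 0) with hS
  have hSne : S.Nonempty :=
    ⟨lam0, by rw [hS, Finset.mem_filter]; exact ⟨Finset.mem_univ _, hlam0⟩⟩
  have hScard : S.card = 2^m - 1 := by
    rw [hS, Finset.filter_ne', Finset.card_erase_of_mem (Finset.mem_univ _),
      Finset.card_univ]
    congr 1
    simp [Fintype.card_fun]
  have haa : ∀ aa ∈ S,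
      (S.filter (fun lam => bFourier (bDeriv aa (bComp lam F)) ≠ 0)).card ≤ 2^(m-2) := by
    intro aa haaS
    rw [hS, Finset.mem_filter] at haaS
    have heq : S.filter (fun lam => bFourier (bDeriv aa (bComp lam F)) ≠ 0)
        = Finset.univ.filter (fun lam : Fin m → ZMod 2 =>
            lam ≠ 0 ∧ bFourier (bDeriv aa (bComp lam F)) ≠ 0) := by
      rw [hS, Finset.filter_filter]
    rw [heq]
    exact Stmt16Aux.bad_count hm hm2 F hF hdeg aa haaS.2
  have hdouble : (∑ lam ∈ S, (Finset.univ.filter (fun aa : Fin m → ZMod 2 =>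
        aa ≠ 0 ∧ bFourier (bDeriv aa (bComp lam F)) ≠ 0)).card)
      ≤ S.card * 2^(m-2) := by
    have hswap : (∑ lam ∈ S, (Finset.univ.filter (fun aa : Fin m → ZMod 2 =>
        aa ≠ 0 ∧ bFourier (bDeriv aa (bComp lam F)) ≠ 0)).card)
        = ∑ aa ∈ S, (S.filter (fun lam =>
            bFourier (bDeriv aa (bComp lam F)) ≠ 0)).card := by
      calc (∑ lam ∈ S, (Finset.univ.filter (fun aa : Fin m → ZMod 2 =>
            aa ≠ 0 ∧ bFourier (bDeriv aa (bComp lam F)) ≠ 0)).card)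
          = ∑ lam ∈ S, ∑ aa ∈ S,
              (if bFourier (bDeriv aa (bComp lam F)) ≠ 0 then 1 else 0) := by
            apply Finset.sum_congr rfl
            intro lam _
            rw [Finset.card_filter]
            rw [hS, Finset.sum_filter]
            apply Finset.sum_congr rfl
            intro aa _
            rw [ite_and]
        _ = ∑ aa ∈ S, ∑ lam ∈ S,
              (if bFourier (bDeriv aa (bComp lam F)) ≠ 0 then 1 else 0) := Finset.sum_comm
        _ = ∑ aa ∈ S, (S.filter (fun lam =>
              bFourier (bDeriv aa (bComp lam F)) ≠ 0)).card := by
            apply Finset.sum_congr rfl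
            intro aa _
            rw [Finset.card_filter]
    rw [hswap]
    calc (∑ aa ∈ S, (S.filter (fun lam =>
          bFourier (bDeriv aa (bComp lam F)) ≠ 0)).card)
        ≤ ∑ _aa ∈ S, 2^(m-2) := Finset.sum_le_sum haa
      _ = S.card * 2^(m-2) := by rw [Finset.sum_const, smul_eq_mul]
  have hpig := Finset.exists_le_of_sum_le hSne
    (le_trans hdouble (le_of_eq (by rw [Finset.sum_const, smul_eq_mul])))
  obtain ⟨lam, hlamS, hlam⟩ := hpig
  have hlamne : lam ≠ 0 := by rw [hS, Finset.mem_filter] at hlamS; exact hlamS.2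
  refine ⟨lam, hlamne, ?_⟩
  set B := Finset.univ.filter (fun aa : Fin m → ZMod 2 =>
    aa ≠ 0 ∧ bFourier (bDeriv aa (bComp lam F)) ≠ 0) with hB
  have hgood : S \ B ⊆ bGamma (bComp lam F) := by
    intro aa haaa
    rw [Finset.mem_sdiff] at haaa
    obtain ⟨haaS, haaB⟩ := haaa
    rw [hS, Finset.mem_filter] at haaS
    have hWz : bFourier (bDeriv aa (bComp lam F)) = 0 := by
      by_contra hne
      exact haaB (by
        rw [hB, Finset.mem_filter]
        exact ⟨Finset.mem_univ _, haaS.2, hne⟩)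
    rw [bGamma, Finset.mem_filter]
    exact ⟨Finset.mem_univ _,
      Stmt16Aux.balanced_of_fourier_zero hm1 _ hWz⟩
  have hcard1 : S.card - B.card ≤ (S \ B).card := Finset.le_card_sdiff _ _
  have hcard2 : (S \ B).card ≤ (bGamma (bComp lam F)).card := Finset.card_le_card hgood
  have hp4 : (2:ℕ)^m = 4 * 2^(m-2) := by
    conv_lhs => rw [show m = (m-2) + 2 by omega]
    ring
  have h1le : 1 ≤ (2:ℕ)^(m-2) := Nat.one_le_two_pow
  omega
end

section
/- For every cubic Boolean function f: F_2^4 → F_2 (algebraic degree exactly 3), the number of directions a in F_2^4 such that the derivative D_a f is balanced is strictly less than 11, i.e., |Γ(f)| ≤ 10. -/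
open scoped Classical

/-! ### Auxiliary machinery -/

/-- Decode a number in `Fin 16` to a point of `F_2^4`. -/
def bfDec (k : Fin 16) : Fin 4 → ZMod 2 :=
  fun i => (⟨(k.val >>> i.val) % 2, Nat.mod_lt _ (by norm_num)⟩ : Fin 2)

/-- Encode a point of `F_2^4` as a number in `Fin 16`. -/
def bfEnc (x : Fin 4 → ZMod 2) : Fin 16 :=
  ⟨(x 0).val + 2 * (x 1).val + 4 * (x 2).val + 8 * (x 3).val, by
    have h0 := ZMod.val_lt (x 0); have h1 := ZMod.val_lt (x 1)
    have h2 := ZMod.val_lt (x 2); have h3 := ZMod.val_lt (x 3)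
    omega⟩

/-- The equivalence `Fin 16 ≃ F_2^4`. -/
def bfE : Fin 16 ≃ (Fin 4 → ZMod 2) := ⟨bfDec, bfEnc, by decide, by decide⟩

/-- Xor on `Fin 16`. -/
def bfXor (a k : Fin 16) : Fin 16 :=
  ⟨k.val ^^^ a.val, Nat.xor_lt_two_pow (n := 4) k.isLt a.isLt⟩

lemma bfDec_xor : ∀ a k : Fin 16, bfDec (bfXor a k) = bfDec k + bfDec a := by decide

/-- Fast computation of the size of `Γ(g)`. -/
def fastGamma (g : BF 4) : ℕ :=
  (Finset.univ.filter (fun a : Fin 16 =>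
    (Finset.univ.filter (fun k : Fin 16 =>
      g (bfDec (bfXor a k)) + g (bfDec k) = 1)).card = 8)).card

lemma filter_card_equiv {α β : Type*} [Fintype α] [Fintype β] (e : α ≃ β)
    (p : β → Prop) [DecidablePred p] :
    (Finset.univ.filter fun a => p (e a)).card = (Finset.univ.filter p).card := by
  calc (Finset.univ.filter fun a => p (e a)).card
      = Fintype.card {a // p (e a)} := (Fintype.card_subtype _).symm
    _ = Fintype.card {b // p b} := Fintype.card_congr (e.subtypeEquiv fun a => Iff.rfl)
    _ = (Finset.univ.filter p).card := Fintype.card_subtype _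

lemma bGamma_card_eq_fast (g : BF 4) : (bGamma g).card = fastGamma g := by
  have h1 : (bGamma g).card
      = (Finset.univ.filter (fun a : Fin 4 → ZMod 2 =>
          (Finset.univ.filter (fun x => bDeriv a g x = 1)).card = 8)).card := by
    unfold bGamma
    congr 1
    ext a
    simp only [Finset.mem_filter, Finset.mem_univ, true_and, bBalanced,
      Finset.filter_congr_decidable]
    norm_num
  rw [h1, fastGamma]
  rw [← filter_card_equiv bfE (fun a => (Finset.univ.filter
        (fun x => bDeriv a g x = 1)).card = 8)]
  congr 1
  apply Finset.filter_congr
  intro a _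
  have h2 : (Finset.univ.filter (fun x => bDeriv (bfE a) g x = 1)).card
      = (Finset.univ.filter (fun k : Fin 16 => bDeriv (bfE a) g (bfE k) = 1)).card :=
    (filter_card_equiv bfE (fun x => bDeriv (bfE a) g x = 1)).symm
  have h3 : (Finset.univ.filter (fun k : Fin 16 => bDeriv (bfE a) g (bfE k) = 1))
      = (Finset.univ.filter (fun k : Fin 16 =>
          g (bfDec (bfXor a k)) + g (bfDec k) = 1)) := by
    apply Finset.filter_congr
    intro k _
    have hE : ∀ j, bfE j = bfDec j := fun _ => rfl
    rw [bDeriv, hE, hE, bfDec_xor]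
  simp only [h2, h3]

/-- Product indicator. -/
lemma bf_indicator (y x : Fin 4 → ZMod 2) :
    (∏ i, (1 + y i + x i)) = if y = x then 1 else 0 := by
  split
  · next h =>
    subst h
    have key : ∀ a : ZMod 2, 1 + a + a = 1 := by decide
    simp [key]
  · next h =>
    obtain ⟨i, hi⟩ : ∃ i, y i ≠ x i := by
      by_contra hc
      push_neg at hc
      exact h (funext hc)
    refine Finset.prod_eq_zero (Finset.mem_univ i) ?_
    have key : ∀ a b : ZMod 2, a ≠ b → 1 + a + b = 0 := by decide
    exact key _ _ hi

lemma bf_sum_prods (y x : Fin 4 → ZMod 2) :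
    ∑ S : Finset (Fin 4), (∏ i ∈ Sᶜ, (1 + y i)) * ∏ i ∈ S, x i
      = ∏ i, (1 + y i + x i) := by
  calc ∑ S : Finset (Fin 4), (∏ i ∈ Sᶜ, (1 + y i)) * ∏ i ∈ S, x i
      = ∑ S ∈ Finset.univ.powerset, (∏ i ∈ S, x i) * ∏ i ∈ Finset.univ \ S, (1 + y i) := by
        rw [Finset.powerset_univ]
        refine Finset.sum_congr rfl fun S _ => ?_
        rw [← Finset.compl_eq_univ_sdiff]
        ring
    _ = ∏ i, (x i + (1 + y i)) := (Finset.prod_add _ _ _).symm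
    _ = ∏ i, (1 + y i + x i) := Finset.prod_congr rfl fun i _ => by ring

/-- ANF inversion formula. -/
lemma bf_anf_inv (f : BF 4) (x : Fin 4 → ZMod 2) :
    f x = ∑ S : Finset (Fin 4), bAnfCoeff f S * ∏ i ∈ S, x i := by
  unfold bAnfCoeff
  simp only [Finset.sum_mul]
  rw [Finset.sum_comm]
  have : ∀ y : Fin 4 → ZMod 2,
      ∑ S : Finset (Fin 4), ((∏ i ∈ Sᶜ, (1 + y i)) * f y) * ∏ i ∈ S, x i
        = f y * ∏ i, (1 + y i + x i) := by
    intro y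
    rw [← bf_sum_prods y x, Finset.mul_sum]
    exact Finset.sum_congr rfl fun S _ => by ring
  simp only [this, bf_indicator]
  simp [Finset.sum_ite_eq']

/-- Expansion of the full ANF sum into 16 explicit terms. -/
lemma bf_sum_expand (c : Finset (Fin 4) → ZMod 2) (x : Fin 4 → ZMod 2) :
    ∑ S : Finset (Fin 4), c S * ∏ i ∈ S, x i
      = c ∅ + c {0} * x 0 + c {1} * x 1 + c {2} * x 2 + c {3} * x 3
        + c {0,1} * (x 0 * x 1) + c {0,2} * (x 0 * x 2) + c {0,3} * (x 0 * x 3)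
        + c {1,2} * (x 1 * x 2) + c {1,3} * (x 1 * x 3) + c {2,3} * (x 2 * x 3)
        + c {0,1,2} * (x 0 * x 1 * x 2) + c {0,1,3} * (x 0 * x 1 * x 3)
        + c {0,2,3} * (x 0 * x 2 * x 3) + c {1,2,3} * (x 1 * x 2 * x 3)
        + c {0,1,2,3} * (x 0 * x 1 * x 2 * x 3) := by
  rw [show (Finset.univ : Finset (Finset (Fin 4)))
      = {∅, {0}, {1}, {2}, {3}, {0,1}, {0,2}, {0,3}, {1,2}, {1,3}, {2,3},
         {0,1,2}, {0,1,3}, {0,2,3}, {1,2,3}, {0,1,2,3}} from by decide]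
  repeat rw [Finset.sum_insert (by decide)]
  rw [Finset.sum_singleton]
  have e0 : ∀ i : Fin 4, (∏ j ∈ ({i} : Finset (Fin 4)), x j) = x i :=
    fun i => Finset.prod_singleton _ _
  have e2 : ∀ i j : Fin 4, i ≠ j → (∏ k ∈ ({i, j} : Finset (Fin 4)), x k) = x i * x j :=
    fun i j h => Finset.prod_pair h
  have e3 : ∀ i j k : Fin 4, (i ≠ j ∧ i ≠ k ∧ j ≠ k) →
      (∏ l ∈ ({i, j, k} : Finset (Fin 4)), x l) = x i * (x j * x k) := by
    intro i j k ⟨h1, h2, h3⟩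
    rw [Finset.prod_insert (by simp [h1, h2]), Finset.prod_pair h3]
  rw [Finset.prod_empty, e0, e0, e0, e0,
    e2 _ _ (by decide), e2 _ _ (by decide), e2 _ _ (by decide),
    e2 _ _ (by decide), e2 _ _ (by decide), e2 _ _ (by decide),
    e3 _ _ _ (by decide), e3 _ _ _ (by decide), e3 _ _ _ (by decide), e3 _ _ _ (by decide)]
  rw [show ({0,1,2,3} : Finset (Fin 4)) = insert 0 {1,2,3} from rfl,
    Finset.prod_insert (by decide), e3 _ _ _ (by decide)]
  ring

/-- Adding an affine function does not change `Γ`. -/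
lemma bGamma_add_affine (g : BF 4) (c0 : ZMod 2) (l : Fin 4 → ZMod 2) :
    bGamma (fun x => g x + (c0 + ∑ i, l i * x i)) = bGamma g := by
  unfold bGamma
  ext a
  simp only [Finset.mem_filter, Finset.mem_univ, true_and]
  have hder : ∀ x, bDeriv a (fun x => g x + (c0 + ∑ i, l i * x i)) x
      = bDeriv a g x + ∑ i, l i * a i := by
    intro x
    have hsum : ∑ i, l i * (x + a) i = (∑ i, l i * x i) + ∑ i, l i * a i := by
      simp only [Pi.add_apply, mul_add]
      rw [Finset.sum_add_distrib]
    simp only [bDeriv, hsum]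
    have key : ∀ A B C D E : ZMod 2,
        (A + (C + (D + E))) + (B + (C + D)) = (A + B) + E := by decide
    exact key (g (x + a)) (g x) c0 (∑ i, l i * x i) (∑ i, l i * a i)
  have hcases : (∑ i, l i * a i) = 0 ∨ (∑ i, l i * a i) = 1 := by
    generalize (∑ i, l i * a i) = e
    revert e; decide
  rcases hcases with hc | hc
  · have : bDeriv a (fun x => g x + (c0 + ∑ i, l i * x i)) = bDeriv a g := by
      funext x; rw [hder x, hc, add_zero]
    rw [this]
  · unfold bBalanced
    have hmem : ∀ x, (bDeriv a (fun x => g x + (c0 + ∑ i, l i * x i)) x = 1)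
        ↔ ¬ (bDeriv a g x = 1) := by
      intro x
      rw [hder x, hc]
      have key : ∀ v : ZMod 2, v + 1 = 1 ↔ ¬ (v = 1) := by decide
      exact key _
    rw [Finset.filter_congr (fun x _ => hmem x), Finset.filter_not,
      Finset.card_sdiff_of_subset (Finset.filter_subset _ _)]
    have hcard : (Finset.univ : Finset (Fin 4 → ZMod 2)).card = 16 := by
      rw [Finset.card_univ]
      simp [Fintype.card_fun]
    have hle := Finset.card_filter_le (Finset.univ : Finset (Fin 4 → ZMod 2))
      (fun x => bDeriv a g x = 1)
    rw [hcard]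
    rw [hcard] at hle
    norm_num
    omega

def decB (n : Nat) : Fin 4 → Bool := fun i => n.testBit i.val

def boolPoly (b0 b1 b2 b3 b4 b5 b6 b7 b8 b9 : Bool) (y : Fin 4 → Bool) : Bool :=
  (((((((((b0 && (y 0 && y 1)).xor (b1 && (y 0 && y 2))).xor (b2 && (y 0 && y 3))).xor
    (b3 && (y 1 && y 2))).xor (b4 && (y 1 && y 3))).xor (b5 && (y 2 && y 3))).xor
    (b6 && (y 0 && y 1 && y 2))).xor (b7 && (y 0 && y 1 && y 3))).xor
    (b8 && (y 0 && y 2 && y 3))).xor (b9 && (y 1 && y 2 && y 3))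

def xpred (h : (Fin 4 → Bool) → Bool) (a k : Nat) : Bool :=
  (h (decB (k ^^^ a))).xor (h (decB k))

def natGamma (h : (Fin 4 → Bool) → Bool) : ℕ :=
  ∑ a ∈ Finset.range 16,
    if (∑ k ∈ Finset.range 16, if xpred h a k = true then 1 else 0) = 8 then 1 else 0

lemma fast_eq_nat (g : BF 4) (h : (Fin 4 → Bool) → Bool)
    (hcomp : ∀ x : Fin 4 → ZMod 2, (g x = 1) ↔ h (fun i => decide (x i = 1)) = true) :
    fastGamma g = natGamma h := by
  have key : ∀ (u v : ZMod 2) (s t : Bool), ((u = 1) ↔ s = true) → ((v = 1) ↔ t = true) →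
      ((u + v = 1) ↔ (s.xor t = true)) := by decide
  have hdecB : ∀ j : Fin 16, (fun i => decide (bfDec j i = 1)) = decB j.val := by decide
  have hpt : ∀ a k : Fin 16,
      (g (bfDec (bfXor a k)) + g (bfDec k) = 1) ↔ (xpred h a.val k.val = true) := by
    intro a k
    have h1 := hcomp (bfDec (bfXor a k))
    rw [hdecB] at h1
    have h2 := hcomp (bfDec k)
    rw [hdecB] at h2
    exact key _ _ _ _ h1 h2
  unfold fastGamma natGamma
  rw [Finset.card_filter]
  have inner : ∀ a : Fin 16, (Finset.univ.filter (fun k : Fin 16 =>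
      g (bfDec (bfXor a k)) + g (bfDec k) = 1)).card
      = ∑ k ∈ Finset.range 16, if xpred h a.val k = true then 1 else 0 := by
    intro a
    rw [Finset.card_filter]
    rw [← Fin.sum_univ_eq_sum_range (fun k => if xpred h a.val k = true then 1 else 0) 16]
    exact Finset.sum_congr rfl fun k _ => if_congr (hpt a k) rfl rfl
  rw [← Fin.sum_univ_eq_sum_range (fun a =>
    if (∑ k ∈ Finset.range 16, if xpred h a k = true then 1 else 0) = 8 then 1 else 0) 16]
  exact Finset.sum_congr rfl fun a _ => if_congr (by rw [inner a]) rfl rfl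

lemma polyZB (q0 q1 q2 q3 q4 q5 q6 q7 q8 q9 : ZMod 2) (x : Fin 4 → ZMod 2) :
    (q0 * (x 0 * x 1) + q1 * (x 0 * x 2) + q2 * (x 0 * x 3)
      + q3 * (x 1 * x 2) + q4 * (x 1 * x 3) + q5 * (x 2 * x 3)
      + q6 * (x 0 * x 1 * x 2) + q7 * (x 0 * x 1 * x 3)
      + q8 * (x 0 * x 2 * x 3) + q9 * (x 1 * x 2 * x 3) = 1)
    ↔ boolPoly (decide (q0 = 1)) (decide (q1 = 1)) (decide (q2 = 1)) (decide (q3 = 1))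
        (decide (q4 = 1)) (decide (q5 = 1)) (decide (q6 = 1)) (decide (q7 = 1))
        (decide (q8 = 1)) (decide (q9 = 1)) (fun i => decide (x i = 1)) = true := by
  have hadd : ∀ a b : ZMod 2, decide (a + b = 1) = ((decide (a = 1)).xor (decide (b = 1))) := by
    decide
  have hmul : ∀ a b : ZMod 2, decide (a * b = 1) = ((decide (a = 1)) && (decide (b = 1))) := by
    decide
  have hd : decide ((q0 * (x 0 * x 1) + q1 * (x 0 * x 2) + q2 * (x 0 * x 3)
      + q3 * (x 1 * x 2) + q4 * (x 1 * x 3) + q5 * (x 2 * x 3)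
      + q6 * (x 0 * x 1 * x 2) + q7 * (x 0 * x 1 * x 3)
      + q8 * (x 0 * x 2 * x 3) + q9 * (x 1 * x 2 * x 3)) = 1)
      = boolPoly (decide (q0 = 1)) (decide (q1 = 1)) (decide (q2 = 1)) (decide (q3 = 1))
        (decide (q4 = 1)) (decide (q5 = 1)) (decide (q6 = 1)) (decide (q7 = 1))
        (decide (q8 = 1)) (decide (q9 = 1)) (fun i => decide (x i = 1)) := by
    simp only [hadd, hmul, boolPoly]
  rw [← hd]
  exact (decide_eq_true_iff (p := _)).symm

set_option maxHeartbeats 4000000 in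
lemma bfChunk_000001 : ∀ b2 b3 b4 b5 : Bool,
    natGamma (boolPoly false false b2 b3 b4 b5 false false false true) ≤ 10 := by
  decide

set_option maxHeartbeats 4000000 in
lemma bfChunk_010001 : ∀ b2 b3 b4 b5 : Bool,
    natGamma (boolPoly false true b2 b3 b4 b5 false false false true) ≤ 10 := by
  decide

set_option maxHeartbeats 4000000 in
lemma bfChunk_100001 : ∀ b2 b3 b4 b5 : Bool,
    natGamma (boolPoly true false b2 b3 b4 b5 false false false true) ≤ 10 := by
  decide

set_option maxHeartbeats 4000000 in
lemma bfChunk_110001 : ∀ b2 b3 b4 b5 : Bool,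
    natGamma (boolPoly true true b2 b3 b4 b5 false false false true) ≤ 10 := by
  decide

set_option maxHeartbeats 4000000 in
lemma bfChunk_000010 : ∀ b2 b3 b4 b5 : Bool,
    natGamma (boolPoly false false b2 b3 b4 b5 false false true false) ≤ 10 := by
  decide

set_option maxHeartbeats 4000000 in
lemma bfChunk_010010 : ∀ b2 b3 b4 b5 : Bool,
    natGamma (boolPoly false true b2 b3 b4 b5 false false true false) ≤ 10 := by
  decide

set_option maxHeartbeats 4000000 in
lemma bfChunk_100010 : ∀ b2 b3 b4 b5 : Bool,
    natGamma (boolPoly true false b2 b3 b4 b5 false false true false) ≤ 10 := by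
  decide

set_option maxHeartbeats 4000000 in
lemma bfChunk_110010 : ∀ b2 b3 b4 b5 : Bool,
    natGamma (boolPoly true true b2 b3 b4 b5 false false true false) ≤ 10 := by
  decide

set_option maxHeartbeats 4000000 in
lemma bfChunk_000011 : ∀ b2 b3 b4 b5 : Bool,
    natGamma (boolPoly false false b2 b3 b4 b5 false false true true) ≤ 10 := by
  decide

set_option maxHeartbeats 4000000 in
lemma bfChunk_010011 : ∀ b2 b3 b4 b5 : Bool,
    natGamma (boolPoly false true b2 b3 b4 b5 false false true true) ≤ 10 := by
  decide

set_option maxHeartbeats 4000000 in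
lemma bfChunk_100011 : ∀ b2 b3 b4 b5 : Bool,
    natGamma (boolPoly true false b2 b3 b4 b5 false false true true) ≤ 10 := by
  decide

set_option maxHeartbeats 4000000 in
lemma bfChunk_110011 : ∀ b2 b3 b4 b5 : Bool,
    natGamma (boolPoly true true b2 b3 b4 b5 false false true true) ≤ 10 := by
  decide

set_option maxHeartbeats 4000000 in
lemma bfChunk_000100 : ∀ b2 b3 b4 b5 : Bool,
    natGamma (boolPoly false false b2 b3 b4 b5 false true false false) ≤ 10 := by
  decide

set_option maxHeartbeats 4000000 in
lemma bfChunk_010100 : ∀ b2 b3 b4 b5 : Bool,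
    natGamma (boolPoly false true b2 b3 b4 b5 false true false false) ≤ 10 := by
  decide

set_option maxHeartbeats 4000000 in
lemma bfChunk_100100 : ∀ b2 b3 b4 b5 : Bool,
    natGamma (boolPoly true false b2 b3 b4 b5 false true false false) ≤ 10 := by
  decide

set_option maxHeartbeats 4000000 in
lemma bfChunk_110100 : ∀ b2 b3 b4 b5 : Bool,
    natGamma (boolPoly true true b2 b3 b4 b5 false true false false) ≤ 10 := by
  decide

set_option maxHeartbeats 4000000 in
lemma bfChunk_000101 : ∀ b2 b3 b4 b5 : Bool,
    natGamma (boolPoly false false b2 b3 b4 b5 false true false true) ≤ 10 := by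
  decide

set_option maxHeartbeats 4000000 in
lemma bfChunk_010101 : ∀ b2 b3 b4 b5 : Bool,
    natGamma (boolPoly false true b2 b3 b4 b5 false true false true) ≤ 10 := by
  decide

set_option maxHeartbeats 4000000 in
lemma bfChunk_100101 : ∀ b2 b3 b4 b5 : Bool,
    natGamma (boolPoly true false b2 b3 b4 b5 false true false true) ≤ 10 := by
  decide

set_option maxHeartbeats 4000000 in
lemma bfChunk_110101 : ∀ b2 b3 b4 b5 : Bool,
    natGamma (boolPoly true true b2 b3 b4 b5 false true false true) ≤ 10 := by
  decide

set_option maxHeartbeats 4000000 in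
lemma bfChunk_000110 : ∀ b2 b3 b4 b5 : Bool,
    natGamma (boolPoly false false b2 b3 b4 b5 false true true false) ≤ 10 := by
  decide

set_option maxHeartbeats 4000000 in
lemma bfChunk_010110 : ∀ b2 b3 b4 b5 : Bool,
    natGamma (boolPoly false true b2 b3 b4 b5 false true true false) ≤ 10 := by
  decide

set_option maxHeartbeats 4000000 in
lemma bfChunk_100110 : ∀ b2 b3 b4 b5 : Bool,
    natGamma (boolPoly true false b2 b3 b4 b5 false true true false) ≤ 10 := by
  decide

set_option maxHeartbeats 4000000 in
lemma bfChunk_110110 : ∀ b2 b3 b4 b5 : Bool,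
    natGamma (boolPoly true true b2 b3 b4 b5 false true true false) ≤ 10 := by
  decide

set_option maxHeartbeats 4000000 in
lemma bfChunk_000111 : ∀ b2 b3 b4 b5 : Bool,
    natGamma (boolPoly false false b2 b3 b4 b5 false true true true) ≤ 10 := by
  decide

set_option maxHeartbeats 4000000 in
lemma bfChunk_010111 : ∀ b2 b3 b4 b5 : Bool,
    natGamma (boolPoly false true b2 b3 b4 b5 false true true true) ≤ 10 := by
  decide

set_option maxHeartbeats 4000000 in
lemma bfChunk_100111 : ∀ b2 b3 b4 b5 : Bool,
    natGamma (boolPoly true false b2 b3 b4 b5 false true true true) ≤ 10 := by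
  decide

set_option maxHeartbeats 4000000 in
lemma bfChunk_110111 : ∀ b2 b3 b4 b5 : Bool,
    natGamma (boolPoly true true b2 b3 b4 b5 false true true true) ≤ 10 := by
  decide

set_option maxHeartbeats 4000000 in
lemma bfChunk_001000 : ∀ b2 b3 b4 b5 : Bool,
    natGamma (boolPoly false false b2 b3 b4 b5 true false false false) ≤ 10 := by
  decide

set_option maxHeartbeats 4000000 in
lemma bfChunk_011000 : ∀ b2 b3 b4 b5 : Bool,
    natGamma (boolPoly false true b2 b3 b4 b5 true false false false) ≤ 10 := by
  decide

set_option maxHeartbeats 4000000 in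
lemma bfChunk_101000 : ∀ b2 b3 b4 b5 : Bool,
    natGamma (boolPoly true false b2 b3 b4 b5 true false false false) ≤ 10 := by
  decide

set_option maxHeartbeats 4000000 in
lemma bfChunk_111000 : ∀ b2 b3 b4 b5 : Bool,
    natGamma (boolPoly true true b2 b3 b4 b5 true false false false) ≤ 10 := by
  decide

set_option maxHeartbeats 4000000 in
lemma bfChunk_001001 : ∀ b2 b3 b4 b5 : Bool,
    natGamma (boolPoly false false b2 b3 b4 b5 true false false true) ≤ 10 := by
  decide

set_option maxHeartbeats 4000000 in
lemma bfChunk_011001 : ∀ b2 b3 b4 b5 : Bool,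
    natGamma (boolPoly false true b2 b3 b4 b5 true false false true) ≤ 10 := by
  decide

set_option maxHeartbeats 4000000 in
lemma bfChunk_101001 : ∀ b2 b3 b4 b5 : Bool,
    natGamma (boolPoly true false b2 b3 b4 b5 true false false true) ≤ 10 := by
  decide

set_option maxHeartbeats 4000000 in
lemma bfChunk_111001 : ∀ b2 b3 b4 b5 : Bool,
    natGamma (boolPoly true true b2 b3 b4 b5 true false false true) ≤ 10 := by
  decide

set_option maxHeartbeats 4000000 in
lemma bfChunk_001010 : ∀ b2 b3 b4 b5 : Bool,
    natGamma (boolPoly false false b2 b3 b4 b5 true false true false) ≤ 10 := by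
  decide

set_option maxHeartbeats 4000000 in
lemma bfChunk_011010 : ∀ b2 b3 b4 b5 : Bool,
    natGamma (boolPoly false true b2 b3 b4 b5 true false true false) ≤ 10 := by
  decide

set_option maxHeartbeats 4000000 in
lemma bfChunk_101010 : ∀ b2 b3 b4 b5 : Bool,
    natGamma (boolPoly true false b2 b3 b4 b5 true false true false) ≤ 10 := by
  decide

set_option maxHeartbeats 4000000 in
lemma bfChunk_111010 : ∀ b2 b3 b4 b5 : Bool,
    natGamma (boolPoly true true b2 b3 b4 b5 true false true false) ≤ 10 := by
  decide

set_option maxHeartbeats 4000000 in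
lemma bfChunk_001011 : ∀ b2 b3 b4 b5 : Bool,
    natGamma (boolPoly false false b2 b3 b4 b5 true false true true) ≤ 10 := by
  decide

set_option maxHeartbeats 4000000 in
lemma bfChunk_011011 : ∀ b2 b3 b4 b5 : Bool,
    natGamma (boolPoly false true b2 b3 b4 b5 true false true true) ≤ 10 := by
  decide

set_option maxHeartbeats 4000000 in
lemma bfChunk_101011 : ∀ b2 b3 b4 b5 : Bool,
    natGamma (boolPoly true false b2 b3 b4 b5 true false true true) ≤ 10 := by
  decide

set_option maxHeartbeats 4000000 in
lemma bfChunk_111011 : ∀ b2 b3 b4 b5 : Bool,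
    natGamma (boolPoly true true b2 b3 b4 b5 true false true true) ≤ 10 := by
  decide

set_option maxHeartbeats 4000000 in
lemma bfChunk_001100 : ∀ b2 b3 b4 b5 : Bool,
    natGamma (boolPoly false false b2 b3 b4 b5 true true false false) ≤ 10 := by
  decide

set_option maxHeartbeats 4000000 in
lemma bfChunk_011100 : ∀ b2 b3 b4 b5 : Bool,
    natGamma (boolPoly false true b2 b3 b4 b5 true true false false) ≤ 10 := by
  decide

set_option maxHeartbeats 4000000 in
lemma bfChunk_101100 : ∀ b2 b3 b4 b5 : Bool,
    natGamma (boolPoly true false b2 b3 b4 b5 true true false false) ≤ 10 := by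
  decide

set_option maxHeartbeats 4000000 in
lemma bfChunk_111100 : ∀ b2 b3 b4 b5 : Bool,
    natGamma (boolPoly true true b2 b3 b4 b5 true true false false) ≤ 10 := by
  decide

set_option maxHeartbeats 4000000 in
lemma bfChunk_001101 : ∀ b2 b3 b4 b5 : Bool,
    natGamma (boolPoly false false b2 b3 b4 b5 true true false true) ≤ 10 := by
  decide

set_option maxHeartbeats 4000000 in
lemma bfChunk_011101 : ∀ b2 b3 b4 b5 : Bool,
    natGamma (boolPoly false true b2 b3 b4 b5 true true false true) ≤ 10 := by
  decide

set_option maxHeartbeats 4000000 in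
lemma bfChunk_101101 : ∀ b2 b3 b4 b5 : Bool,
    natGamma (boolPoly true false b2 b3 b4 b5 true true false true) ≤ 10 := by
  decide

set_option maxHeartbeats 4000000 in
lemma bfChunk_111101 : ∀ b2 b3 b4 b5 : Bool,
    natGamma (boolPoly true true b2 b3 b4 b5 true true false true) ≤ 10 := by
  decide

set_option maxHeartbeats 4000000 in
lemma bfChunk_001110 : ∀ b2 b3 b4 b5 : Bool,
    natGamma (boolPoly false false b2 b3 b4 b5 true true true false) ≤ 10 := by
  decide

set_option maxHeartbeats 4000000 in
lemma bfChunk_011110 : ∀ b2 b3 b4 b5 : Bool,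
    natGamma (boolPoly false true b2 b3 b4 b5 true true true false) ≤ 10 := by
  decide

set_option maxHeartbeats 4000000 in
lemma bfChunk_101110 : ∀ b2 b3 b4 b5 : Bool,
    natGamma (boolPoly true false b2 b3 b4 b5 true true true false) ≤ 10 := by
  decide

set_option maxHeartbeats 4000000 in
lemma bfChunk_111110 : ∀ b2 b3 b4 b5 : Bool,
    natGamma (boolPoly true true b2 b3 b4 b5 true true true false) ≤ 10 := by
  decide

set_option maxHeartbeats 4000000 in
lemma bfChunk_001111 : ∀ b2 b3 b4 b5 : Bool,
    natGamma (boolPoly false false b2 b3 b4 b5 true true true true) ≤ 10 := by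
  decide

set_option maxHeartbeats 4000000 in
lemma bfChunk_011111 : ∀ b2 b3 b4 b5 : Bool,
    natGamma (boolPoly false true b2 b3 b4 b5 true true true true) ≤ 10 := by
  decide

set_option maxHeartbeats 4000000 in
lemma bfChunk_101111 : ∀ b2 b3 b4 b5 : Bool,
    natGamma (boolPoly true false b2 b3 b4 b5 true true true true) ≤ 10 := by
  decide

set_option maxHeartbeats 4000000 in
lemma bfChunk_111111 : ∀ b2 b3 b4 b5 : Bool,
    natGamma (boolPoly true true b2 b3 b4 b5 true true true true) ≤ 10 := by
  decide

lemma bf_core_nat : ∀ b0 b1 b2 b3 b4 b5 b6 b7 b8 b9 : Bool,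
    (b6 || b7 || b8 || b9) = true →
    natGamma (boolPoly b0 b1 b2 b3 b4 b5 b6 b7 b8 b9) ≤ 10 := by
  intro b0 b1 b2 b3 b4 b5 b6 b7 b8 b9 hcub
  cases b0 <;> cases b1 <;> cases b6 <;> cases b7 <;> cases b8 <;> cases b9
  · exact absurd hcub (by decide)
  · exact bfChunk_000001 b2 b3 b4 b5
  · exact bfChunk_000010 b2 b3 b4 b5
  · exact bfChunk_000011 b2 b3 b4 b5
  · exact bfChunk_000100 b2 b3 b4 b5
  · exact bfChunk_000101 b2 b3 b4 b5
  · exact bfChunk_000110 b2 b3 b4 b5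
  · exact bfChunk_000111 b2 b3 b4 b5
  · exact bfChunk_001000 b2 b3 b4 b5
  · exact bfChunk_001001 b2 b3 b4 b5
  · exact bfChunk_001010 b2 b3 b4 b5
  · exact bfChunk_001011 b2 b3 b4 b5
  · exact bfChunk_001100 b2 b3 b4 b5
  · exact bfChunk_001101 b2 b3 b4 b5
  · exact bfChunk_001110 b2 b3 b4 b5
  · exact bfChunk_001111 b2 b3 b4 b5
  · exact absurd hcub (by decide)
  · exact bfChunk_010001 b2 b3 b4 b5
  · exact bfChunk_010010 b2 b3 b4 b5
  · exact bfChunk_010011 b2 b3 b4 b5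
  · exact bfChunk_010100 b2 b3 b4 b5
  · exact bfChunk_010101 b2 b3 b4 b5
  · exact bfChunk_010110 b2 b3 b4 b5
  · exact bfChunk_010111 b2 b3 b4 b5
  · exact bfChunk_011000 b2 b3 b4 b5
  · exact bfChunk_011001 b2 b3 b4 b5
  · exact bfChunk_011010 b2 b3 b4 b5
  · exact bfChunk_011011 b2 b3 b4 b5
  · exact bfChunk_011100 b2 b3 b4 b5
  · exact bfChunk_011101 b2 b3 b4 b5
  · exact bfChunk_011110 b2 b3 b4 b5
  · exact bfChunk_011111 b2 b3 b4 b5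
  · exact absurd hcub (by decide)
  · exact bfChunk_100001 b2 b3 b4 b5
  · exact bfChunk_100010 b2 b3 b4 b5
  · exact bfChunk_100011 b2 b3 b4 b5
  · exact bfChunk_100100 b2 b3 b4 b5
  · exact bfChunk_100101 b2 b3 b4 b5
  · exact bfChunk_100110 b2 b3 b4 b5
  · exact bfChunk_100111 b2 b3 b4 b5
  · exact bfChunk_101000 b2 b3 b4 b5
  · exact bfChunk_101001 b2 b3 b4 b5
  · exact bfChunk_101010 b2 b3 b4 b5
  · exact bfChunk_101011 b2 b3 b4 b5
  · exact bfChunk_101100 b2 b3 b4 b5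
  · exact bfChunk_101101 b2 b3 b4 b5
  · exact bfChunk_101110 b2 b3 b4 b5
  · exact bfChunk_101111 b2 b3 b4 b5
  · exact absurd hcub (by decide)
  · exact bfChunk_110001 b2 b3 b4 b5
  · exact bfChunk_110010 b2 b3 b4 b5
  · exact bfChunk_110011 b2 b3 b4 b5
  · exact bfChunk_110100 b2 b3 b4 b5
  · exact bfChunk_110101 b2 b3 b4 b5
  · exact bfChunk_110110 b2 b3 b4 b5
  · exact bfChunk_110111 b2 b3 b4 b5
  · exact bfChunk_111000 b2 b3 b4 b5
  · exact bfChunk_111001 b2 b3 b4 b5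
  · exact bfChunk_111010 b2 b3 b4 b5
  · exact bfChunk_111011 b2 b3 b4 b5
  · exact bfChunk_111100 b2 b3 b4 b5
  · exact bfChunk_111101 b2 b3 b4 b5
  · exact bfChunk_111110 b2 b3 b4 b5
  · exact bfChunk_111111 b2 b3 b4 b5

theorem stmt17 (f : BF 4) (hf : bAlgDeg f = 3) : (bGamma f).card ≤ 10 := by
  set c : Finset (Fin 4) → ZMod 2 := bAnfCoeff f with hc
  have hne : bDegLE f 4 := by
    intro S hS
    exact absurd hS (by have := Finset.card_le_univ S; simp at this; omega)
  have h3 : bDegLE f 3 := by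
    have hmem : bAlgDeg f ∈ {d | bDegLE f d} := Nat.sInf_mem ⟨4, hne⟩
    rwa [hf] at hmem
  have h2 : ¬ bDegLE f 2 := by
    intro h
    have hle : bAlgDeg f ≤ 2 := Nat.sInf_le (show 2 ∈ {d | bDegLE f d} from h)
    rw [hf] at hle
    omega
  have htop : c Finset.univ = 0 := h3 Finset.univ (by decide)
  obtain ⟨S1, hS1card, hS1⟩ : ∃ S, 2 < S.card ∧ c S ≠ 0 := by
    unfold bDegLE at h2
    push_neg at h2
    exact h2
  have hS1c3 : S1.card = 3 := by
    rcases Nat.lt_or_ge S1.card 4 with h | h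
    · omega
    · exfalso
      have h4 : S1.card = 4 := by
        have := Finset.card_le_univ S1; simp at this; omega
      have : S1 = Finset.univ := by
        apply Finset.eq_univ_of_card; simpa using h4
      rw [this] at hS1
      exact hS1 htop
  have hopts : ∀ S : Finset (Fin 4), S.card = 3 →
      S = {0,1,2} ∨ S = {0,1,3} ∨ S = {0,2,3} ∨ S = {1,2,3} := by decide
  have hone : ∀ v : ZMod 2, v ≠ 0 → v = 1 := by decide
  have hcube : c {0,1,2} = 1 ∨ c {0,1,3} = 1 ∨ c {0,2,3} = 1 ∨ c {1,2,3} = 1 := by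
    rcases hopts S1 hS1c3 with h | h | h | h
    · exact Or.inl (hone _ (h ▸ hS1))
    · exact Or.inr (Or.inl (hone _ (h ▸ hS1)))
    · exact Or.inr (Or.inr (Or.inl (hone _ (h ▸ hS1))))
    · exact Or.inr (Or.inr (Or.inr (hone _ (h ▸ hS1))))
  have hfg : f = fun x =>
      (c {0,1} * (x 0 * x 1) + c {0,2} * (x 0 * x 2) + c {0,3} * (x 0 * x 3)
        + c {1,2} * (x 1 * x 2) + c {1,3} * (x 1 * x 3) + c {2,3} * (x 2 * x 3)
        + c {0,1,2} * (x 0 * x 1 * x 2) + c {0,1,3} * (x 0 * x 1 * x 3)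
        + c {0,2,3} * (x 0 * x 2 * x 3) + c {1,2,3} * (x 1 * x 2 * x 3))
      + (c ∅ + ∑ i, c {i} * x i) := by
    funext x
    have htop' : c {0,1,2,3} = 0 := by
      rw [show ({0,1,2,3} : Finset (Fin 4)) = Finset.univ from by decide]; exact htop
    rw [bf_anf_inv f x, ← hc, bf_sum_expand c x, htop', Fin.sum_univ_four]
    ring
  rw [hfg, bGamma_add_affine
    (fun x => c {0,1} * (x 0 * x 1) + c {0,2} * (x 0 * x 2) + c {0,3} * (x 0 * x 3)
      + c {1,2} * (x 1 * x 2) + c {1,3} * (x 1 * x 3) + c {2,3} * (x 2 * x 3)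
      + c {0,1,2} * (x 0 * x 1 * x 2) + c {0,1,3} * (x 0 * x 1 * x 3)
      + c {0,2,3} * (x 0 * x 2 * x 3) + c {1,2,3} * (x 1 * x 2 * x 3))
    (c ∅) (fun i => c {i}), bGamma_card_eq_fast,
    fast_eq_nat _ (boolPoly (decide (c {0,1} = 1)) (decide (c {0,2} = 1)) (decide (c {0,3} = 1))
      (decide (c {1,2} = 1)) (decide (c {1,3} = 1)) (decide (c {2,3} = 1))
      (decide (c {0,1,2} = 1)) (decide (c {0,1,3} = 1)) (decide (c {0,2,3} = 1))
      (decide (c {1,2,3} = 1)))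
    (fun x => polyZB (c {0,1}) (c {0,2}) (c {0,3}) (c {1,2}) (c {1,3}) (c {2,3})
      (c {0,1,2}) (c {0,1,3}) (c {0,2,3}) (c {1,2,3}) x)]
  refine bf_core_nat _ _ _ _ _ _ _ _ _ _ ?_
  rcases hcube with h | h | h | h <;> simp [h]
end

section
/- There is no APN function F: F_2^4 → F_2^4 all of whose nonzero components have algebraic degree exactly 3 (pure cubic). -/
open scoped Classical

/-!
Count the pairs `(λ, a)` of nonzero vectors for which the derivative `D_a F_λ` is unbalanced,
writing `Δ_f(a) = ∑ₓ (-1)^(D_a f(x))` for the autocorrelation and `W_f` for the Walsh transform.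

For fixed `a ≠ 0`, the APN property makes every fibre of `D_a F` a pair `{x, x + a}`, so
`∑_λ Δ_{F_λ}(a)² = 2 · 16²`; the term `λ = 0` takes half of this, and since the components have
degree at most 3, every `Δ_{F_λ}(a)` is a multiple of 8. Hence at most 4 of the 15 components are
unbalanced in direction `a`: at most 60 pairs.

For fixed `λ ≠ 0`, the cubic `f = F_λ` has at most one nonzero linear structure, i.e. at most one
`a ≠ 0` with `|Δ_f(a)| = 16`. If at most 4 directions were unbalanced, then
`∑_{a ≠ 0} |Δ_f(a)| ≤ 40`, and the Wiener–Khinchin identity `W_f(u)² = ∑_a Δ_f(a) (-1)^(u·a)`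
would give `W_f(u)² ≤ 56`; as `4 ∣ W_f(u)` and `∑_u W_f(u)² = 256`, `f` would be bent, which a
cubic in four variables is not. Hence at least 5 directions are unbalanced: at least 75 pairs.
-/

open Finset Matrix

section

variable {m : ℕ}

lemma add_self_eq_zero_pi (x : Fin m → ZMod 2) : x + x = 0 :=
  funext fun i => CharTwo.add_self_eq_zero (x i)

lemma add_apply_eq_zero_iff {a x : Fin m → ZMod 2} {i : Fin m} (ha : a i = 1) :
    (x + a) i = 0 ↔ ¬ x i = 0 := by
  rw [Pi.add_apply, ha]; generalize x i = v; revert v; decide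

lemma exists_apply_eq_one {a : Fin m → ZMod 2} (ha : a ≠ 0) : ∃ i, a i = 1 := by
  obtain ⟨i, hi⟩ := Function.ne_iff.1 ha
  exact ⟨i, Fin.eq_one_of_ne_zero _ hi⟩

lemma card_univ_pi_zmod_two : #(univ : Finset (Fin m → ZMod 2)) = 2 ^ m := by
  simp

lemma card_filter_ne_zero : #{a : Fin m → ZMod 2 | a ≠ 0} = 2 ^ m - 1 := by
  rw [filter_ne', card_erase_of_mem (mem_univ _), card_univ_pi_zmod_two]

lemma card_filter_ne_zero_and_add_card_filter_ne_zero_and_not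
    (p : (Fin m → ZMod 2) → Prop) [DecidablePred p] :
    #{a | a ≠ 0 ∧ p a} + #{a | a ≠ 0 ∧ ¬ p a} = 2 ^ m - 1 := by
  rw [← filter_filter, ← filter_filter, card_filter_add_card_filter_not, card_filter_ne_zero]

lemma sum_eq_sum_filter_add_translate {β : Type*} [AddCommMonoid β]
    {s : Finset (Fin m → ZMod 2)} {q : (Fin m → ZMod 2) → Prop} [DecidablePred q]
    {a : Fin m → ZMod 2} (hs : ∀ x ∈ s, x + a ∈ s) (hq : ∀ x, q (x + a) ↔ ¬ q x)
    (g : (Fin m → ZMod 2) → β) :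
    ∑ x ∈ s, g x = ∑ x ∈ s with q x, (g x + g (x + a)) := by
  have hcancel : ∀ x : Fin m → ZMod 2, x + a + a = x := fun x => by
    rw [add_assoc, add_self_eq_zero_pi, add_zero]
  have htranslate : ∑ x ∈ s with ¬ q x, g x = ∑ x ∈ s with q x, g (x + a) := by
    refine sum_nbij' (· + a) (· + a) ?_ ?_ (fun x _ => hcancel x) (fun x _ => hcancel x)
      (fun x _ => by rw [hcancel])
    · intro x hx
      simp only [mem_filter] at hx ⊢
      exact ⟨hs x hx.1, by rw [hq]; exact hx.2⟩
    · intro x hx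
      simp only [mem_filter] at hx ⊢
      exact ⟨hs x hx.1, by rw [hq, not_not]; exact hx.2⟩
  rw [← sum_filter_add_sum_filter_not s q, htranslate, sum_add_distrib]

lemma two_mul_card_filter_apply_eq_zero (j : Fin m) :
    2 * #{x : Fin m → ZMod 2 | x j = 0} = 2 ^ m := by
  have hsingle : (Pi.single j 1 : Fin m → ZMod 2) j = 1 := Pi.single_eq_same j _
  have := sum_eq_sum_filter_add_translate (s := univ) (q := fun x => x j = 0)
    (a := Pi.single j 1) (fun _ _ => mem_univ _) (fun _ => add_apply_eq_zero_iff hsingle)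
    (fun _ => 1)
  simp only [sum_const, card_univ_pi_zmod_two, smul_eq_mul, mul_one] at this
  omega

lemma neg_one_pow_val_one : (-1 : ℤ) ^ (1 : ZMod 2).val = -1 := rfl

lemma neg_one_pow_val_add (u v : ZMod 2) :
    (-1 : ℤ) ^ (u + v).val = (-1) ^ u.val * (-1) ^ v.val := by
  revert u v; decide

lemma neg_one_pow_val_eq (v : ZMod 2) : (-1 : ℤ) ^ v.val = 1 - 2 * v.val := by
  revert v; decide

lemma sum_neg_one_pow_val {α : Type*} (s : Finset α) (g : α → ZMod 2) :
    ∑ x ∈ s, (-1 : ℤ) ^ (g x).val = #s - 2 * ((∑ x ∈ s, (g x).val : ℕ) : ℤ) := by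
  simp only [neg_one_pow_val_eq, sum_sub_distrib, ← mul_sum, sum_const, nsmul_one]
  push_cast; ring

lemma natCast_sum_val {α : Type*} (s : Finset α) (g : α → ZMod 2) :
    ((∑ x ∈ s, (g x).val : ℕ) : ZMod 2) = ∑ x ∈ s, g x := by
  push_cast [ZMod.natCast_val, ZMod.cast_id', id]; rfl

lemma card_filter_eq_one_eq_sum_val {α : Type*} [Fintype α] (g : α → ZMod 2) :
    #{x | g x = 1} = ∑ x, (g x).val := by
  rw [card_filter]
  exact sum_congr rfl fun x _ => by generalize g x = v; revert v; decide

lemma bFourier_eq (g : BF m) : bFourier g = 2 ^ m - 2 * ((∑ x, (g x).val : ℕ) : ℤ) := by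
  rw [bFourier, sum_neg_one_pow_val, card_univ_pi_zmod_two]; push_cast; ring

lemma bBalanced_iff_bFourier_eq_zero (hm : m ≠ 0) (g : BF m) :
    bBalanced g ↔ bFourier g = 0 := by
  obtain ⟨k, rfl⟩ := Nat.exists_eq_succ_of_ne_zero hm
  rw [bBalanced, bFourier_eq, card_filter_eq_one_eq_sum_val, Nat.succ_sub_one, pow_succ]
  have : ((2 ^ k : ℕ) : ℤ) = 2 ^ k := by push_cast; rfl
  omega

lemma bFourier_bDeriv_zero (f : BF m) : bFourier (bDeriv 0 f) = 2 ^ m := by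
  simp [bFourier, bDeriv, CharTwo.add_self_eq_zero]

lemma mem_bGamma_iff (hm : m ≠ 0) {f : BF m} {a : Fin m → ZMod 2} :
    a ∈ bGamma f ↔ bFourier (bDeriv a f) = 0 := by
  rw [bGamma, mem_filter, bBalanced_iff_bFourier_eq_zero hm, and_iff_right (mem_univ a)]

lemma card_bGamma_add_card_filter_bFourier_bDeriv_ne_zero (hm : m ≠ 0) (f : BF m) :
    #(bGamma f) + #{a | a ≠ 0 ∧ bFourier (bDeriv a f) ≠ 0} = 2 ^ m - 1 := by
  have hΓ : bGamma f = ({a | a ≠ 0 ∧ bFourier (bDeriv a f) = 0} : Finset _) := by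
    refine Finset.ext fun a => ?_
    simp only [mem_bGamma_iff hm, mem_filter, mem_univ, true_and]
    refine ⟨fun h => ⟨?_, h⟩, And.right⟩
    rintro rfl
    simp [bFourier_bDeriv_zero] at h
  rw [hΓ, card_filter_ne_zero_and_add_card_filter_ne_zero_and_not]

lemma abs_bFourier_le (g : BF m) : |bFourier g| ≤ 2 ^ m :=
  (abs_sum_le_sum_abs _ _).trans (by simp)

def bWalsh (f : BF m) (u : Fin m → ZMod 2) : ℤ := bFourier fun x => f x + u ⬝ᵥ x

lemma sum_neg_one_pow_dotProduct (v : Fin m → ZMod 2) :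
    ∑ u : Fin m → ZMod 2, (-1 : ℤ) ^ (u ⬝ᵥ v).val = if v = 0 then 2 ^ m else 0 := by
  split_ifs with hv
  · simp [hv]
  obtain ⟨i, hi⟩ := exists_apply_eq_one hv
  have hflip : ∀ u : Fin m → ZMod 2,
      (-1 : ℤ) ^ ((u + Pi.single i 1) ⬝ᵥ v).val = -(-1) ^ (u ⬝ᵥ v).val := fun u => by
    rw [add_dotProduct, single_dotProduct, hi, one_mul, neg_one_pow_val_add,
      neg_one_pow_val_one, mul_neg_one]
  have := Equiv.sum_comp (Equiv.addRight (Pi.single i 1)) fun u => (-1 : ℤ) ^ (u ⬝ᵥ v).val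
  simp only [Equiv.coe_addRight, hflip, sum_neg_distrib] at this
  linarith

lemma sum_bFourier_bDeriv_mul (f : BF m) (u : Fin m → ZMod 2) :
    ∑ a, bFourier (bDeriv a f) * (-1) ^ (u ⬝ᵥ a).val = bWalsh f u ^ 2 := by
  have hshift : ∀ x : Fin m → ZMod 2,
      ∑ a, (-1 : ℤ) ^ (bDeriv a f x + u ⬝ᵥ a).val
        = ∑ y, (-1) ^ (f x + u ⬝ᵥ x + (f y + u ⬝ᵥ y)).val := by
    intro x
    rw [← Equiv.sum_comp (Equiv.addLeft x)]
    refine sum_congr rfl fun a _ => congrArg _ (congrArg _ ?_)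
    simp only [bDeriv, Equiv.coe_addLeft, dotProduct_add, ← add_assoc, add_self_eq_zero_pi,
      zero_add]
    ring
  calc ∑ a, bFourier (bDeriv a f) * (-1) ^ (u ⬝ᵥ a).val
      = ∑ x, ∑ a, (-1 : ℤ) ^ (bDeriv a f x + u ⬝ᵥ a).val := by
        simp only [bFourier, sum_mul, ← neg_one_pow_val_add]; exact sum_comm
    _ = ∑ x, ∑ y, (-1) ^ (f x + u ⬝ᵥ x + (f y + u ⬝ᵥ y)).val :=
        sum_congr rfl fun x _ => hshift x
    _ = bWalsh f u ^ 2 := by simp only [bWalsh, bFourier, sq, sum_mul_sum, neg_one_pow_val_add]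

lemma sum_sq_bWalsh (f : BF m) : ∑ u, bWalsh f u ^ 2 = 2 ^ m * 2 ^ m := by
  calc ∑ u, bWalsh f u ^ 2 = ∑ u, ∑ a, bFourier (bDeriv a f) * (-1) ^ (u ⬝ᵥ a).val := by
        simp only [sum_bFourier_bDeriv_mul]
    _ = ∑ a, bFourier (bDeriv a f) * ∑ u : Fin m → ZMod 2, (-1) ^ (u ⬝ᵥ a).val := by
        rw [sum_comm]; simp only [mul_sum]
    _ = 2 ^ m * 2 ^ m := by
        simp only [sum_neg_one_pow_dotProduct, mul_ite, mul_zero, sum_ite_eq', mem_univ,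
          if_true, bFourier_bDeriv_zero]

lemma sq_bWalsh_le (f : BF m) (u : Fin m → ZMod 2) :
    bWalsh f u ^ 2 ≤ 2 ^ m + ∑ a with a ≠ 0, |bFourier (bDeriv a f)| := by
  rw [← sum_bFourier_bDeriv_mul, filter_ne', ← add_sum_erase _ _ (mem_univ 0),
    bFourier_bDeriv_zero, dotProduct_zero]
  refine add_le_add (by simp) (sum_le_sum fun a _ => ?_)
  calc bFourier (bDeriv a f) * (-1) ^ (u ⬝ᵥ a).val
      ≤ |bFourier (bDeriv a f) * (-1) ^ (u ⬝ᵥ a).val| := le_abs_self _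
    _ = |bFourier (bDeriv a f)| := by simp [abs_mul]

lemma bWalsh_zero_add_bWalsh_single (f : BF m) (j : Fin m) :
    bWalsh f 0 + bWalsh f (Pi.single j 1) = 2 * ∑ x with x j = 0, (-1 : ℤ) ^ (f x).val := by
  simp only [bWalsh, bFourier, ← sum_add_distrib, sum_filter, mul_sum, zero_dotProduct,
    single_dotProduct, one_mul, add_zero, neg_one_pow_val_add]
  refine sum_congr rfl fun x _ => ?_
  rcases (by decide : ∀ v : ZMod 2, v = 0 ∨ v = 1) (x j) with h | h
  · simp [h]; ring
  · simp [h, neg_one_pow_val_one]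

lemma sum_sq_sum_neg_one_pow_dotProduct {ι : Type*} [Fintype ι] (G : ι → Fin m → ZMod 2) :
    ∑ lam : Fin m → ZMod 2, (∑ x, (-1 : ℤ) ^ (lam ⬝ᵥ G x).val) ^ 2
      = 2 ^ m * #{p : ι × ι | G p.1 = G p.2} := by
  have hcoll : ∀ x y, G x + G y = 0 ↔ G x = G y := fun x y => by
    rw [add_eq_zero_iff_eq_neg, ZModModule.neg_eq_self]
  simp only [sq, sum_mul_sum, ← neg_one_pow_val_add, ← dotProduct_add]
  rw [card_filter, Fintype.sum_prod_type]
  push_cast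
  rw [sum_comm, mul_sum]
  refine sum_congr rfl fun x _ => ?_
  rw [sum_comm, mul_sum]
  refine sum_congr rfl fun y _ => ?_
  simp only [sum_neg_one_pow_dotProduct, hcoll, mul_ite, mul_one, mul_zero]

lemma bAnfCoeff_univ (f : BF m) : bAnfCoeff f univ = ∑ x, f x := by
  simp [bAnfCoeff]

lemma bAnfCoeff_compl_singleton (f : BF m) (j : Fin m) :
    bAnfCoeff f {j}ᶜ = ∑ x with x j = 0, f x := by
  rw [bAnfCoeff, compl_compl, sum_filter]
  refine sum_congr rfl fun x _ => ?_
  rw [prod_singleton]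
  generalize x j = v; generalize f x = w; revert v w; decide

lemma bDegLE_bAlgDeg (f : BF m) : bDegLE f (bAlgDeg f) :=
  Nat.sInf_mem (s := {d | bDegLE f d}) ⟨m, fun S hS => absurd (card_le_univ S) (by simpa)⟩

lemma sum_eq_zero_of_bAlgDeg_lt {f : BF m} (h : bAlgDeg f < m) : ∑ x, f x = 0 := by
  rw [← bAnfCoeff_univ]
  exact bDegLE_bAlgDeg f univ (by simpa)

lemma exists_sum_hyperplane_ne_zero {f : BF m} (hm : 2 ≤ m) (h : bAlgDeg f + 1 = m) :
    ∃ j, ∑ x with x j = 0, f x ≠ 0 := by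
  have hlow : bAlgDeg f - 1 ∉ {d | bDegLE f d} :=
    Nat.notMem_of_lt_sInf (show bAlgDeg f - 1 < bAlgDeg f by omega)
  simp only [Set.mem_ofPred_eq, bDegLE, not_forall] at hlow
  obtain ⟨S, hS, hne⟩ := hlow
  have hS' : #S = bAlgDeg f := by
    by_contra hS'
    exact hne (bDegLE_bAlgDeg f S (by omega))
  obtain ⟨j, hj⟩ : ∃ j, Sᶜ = {j} := card_eq_one.1 (by rw [card_compl, Fintype.card_fin]; omega)
  refine ⟨j, ?_⟩
  rwa [← bAnfCoeff_compl_singleton, ← hj, compl_compl]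

lemma four_dvd_sum_val_bDeriv {f : BF m} (hf : ∑ x, f x = 0) {a : Fin m → ZMod 2}
    (ha : a ≠ 0) : 4 ∣ ∑ x, (bDeriv a f x).val := by
  obtain ⟨i, hi⟩ := exists_apply_eq_one ha
  have hsplit := fun {β : Type} [AddCommMonoid β] (g : (Fin m → ZMod 2) → β) =>
    sum_eq_sum_filter_add_translate (s := univ) (q := fun x => x i = 0) (a := a)
      (fun _ _ => mem_univ _) (fun _ => add_apply_eq_zero_iff hi) g
  have hperiodic : ∀ x, bDeriv a f (x + a) = bDeriv a f x := fun x => by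
    simp only [bDeriv]
    rw [add_assoc, add_self_eq_zero_pi, add_zero, add_comm]
  -- `D_a f` is `a`-periodic, so its weight is twice its weight on the hyperplane `x i = 0`,
  -- and the latter is even because `∑_{x i = 0} D_a f x = ∑ f`.
  have hparity : ∑ x with x i = 0, bDeriv a f x = 0 :=
    calc ∑ x with x i = 0, bDeriv a f x = ∑ x with x i = 0, (f x + f (x + a)) :=
          sum_congr rfl fun x _ => add_comm _ _
      _ = 0 := (hsplit f).symm.trans hf
  rw [hsplit, sum_congr rfl fun x _ => by rw [hperiodic, ← two_mul], ← mul_sum]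
  rw [← natCast_sum_val, ZMod.natCast_eq_zero_iff] at hparity
  exact Nat.mul_dvd_mul_left 2 hparity

lemma eight_dvd_bFourier_bDeriv (hm : 3 ≤ m) {f : BF m} (hf : ∑ x, f x = 0)
    {a : Fin m → ZMod 2} (ha : a ≠ 0) : 8 ∣ bFourier (bDeriv a f) := by
  obtain ⟨k, hk⟩ := four_dvd_sum_val_bDeriv hf ha
  rw [bFourier_eq, hk]
  exact dvd_sub (by simpa using pow_dvd_pow (2 : ℤ) hm) ⟨k, by push_cast; ring⟩

lemma sum_dotProduct_eq_zero (hm : 2 ≤ m) (u : Fin m → ZMod 2) : ∑ x, u ⬝ᵥ x = 0 := by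
  by_cases hu : u = 0
  · simp [hu]
  have hbalanced : bFourier (fun x => u ⬝ᵥ x) = 0 := by
    simpa [bFourier, hu, dotProduct_comm u] using sum_neg_one_pow_dotProduct u
  obtain ⟨k, rfl⟩ := Nat.exists_eq_add_of_le hm
  rw [bFourier_eq, pow_add] at hbalanced
  have hweight : ∑ x, (u ⬝ᵥ x).val = 2 * 2 ^ k := by
    have : ((2 ^ k : ℕ) : ℤ) = 2 ^ k := by push_cast; rfl
    omega
  rw [← natCast_sum_val, hweight, ZMod.natCast_eq_zero_iff]
  exact Nat.dvd_mul_right 2 _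

lemma four_dvd_bWalsh (hm : 2 ≤ m) {f : BF m} (hf : ∑ x, f x = 0) (u : Fin m → ZMod 2) :
    4 ∣ bWalsh f u := by
  have hparity : ∑ x, (f x + u ⬝ᵥ x) = 0 := by
    rw [sum_add_distrib, hf, sum_dotProduct_eq_zero hm, add_zero]
  rw [← natCast_sum_val, ZMod.natCast_eq_zero_iff] at hparity
  obtain ⟨k, hk⟩ := hparity
  rw [bWalsh, bFourier_eq, hk]
  exact dvd_sub (by simpa using pow_dvd_pow (2 : ℤ) hm) ⟨k, by push_cast; ring⟩

lemma eq_zero_of_bFourier_eq {g : BF m} (h : bFourier g = 2 ^ m) (x : Fin m → ZMod 2) :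
    g x = 0 := by
  have hterms : ∀ y ∈ univ, (-1 : ℤ) ^ (g y).val = 1 := by
    refine (sum_eq_sum_iff_of_le fun y _ => ?_).1 (by simpa [bFourier] using h)
    generalize g y = v; revert v; decide
  have := hterms x (mem_univ x)
  generalize g x = v at this; revert v; decide

lemma bLinStruct_of_abs_bFourier_bDeriv {f : BF m} {a : Fin m → ZMod 2}
    (h : |bFourier (bDeriv a f)| = 2 ^ m) : bLinStruct f a := by
  rcases abs_eq (by positivity) |>.1 h with h | h
  · exact ⟨0, eq_zero_of_bFourier_eq h⟩
  · refine ⟨1, fun x => ?_⟩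
    have hflip : bFourier (fun y => bDeriv a f y + 1) = 2 ^ m := by
      simp only [bFourier, neg_one_pow_val_add, neg_one_pow_val_one,
        mul_neg_one, sum_neg_distrib]
      rw [← bFourier, h, neg_neg]
    have := eq_zero_of_bFourier_eq hflip x
    rwa [add_eq_zero_iff_eq_neg, ZModModule.neg_eq_self] at this

lemma bLinStruct.add {f : BF m} {a b : Fin m → ZMod 2} (ha : bLinStruct f a)
    (hb : bLinStruct f b) : bLinStruct f (a + b) := by
  obtain ⟨c, hc⟩ := ha
  obtain ⟨d, hd⟩ := hb
  refine ⟨c + d, fun x => ?_⟩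
  rw [show x + (a + b) = x + b + a by abel, ← hc (x + b), ← hd x, add_assoc (f (x + b + a)),
    CharTwo.add_cancel_left]

lemma sum_hyperplane_eq_zero_of_bLinStruct (hm : 3 ≤ m) {f : BF m} {d : Fin m → ZMod 2}
    (hd : d ≠ 0) (hlin : bLinStruct f d) {j : Fin m} (hdj : d j = 0) :
    ∑ x with x j = 0, f x = 0 := by
  obtain ⟨j', hj'⟩ := exists_apply_eq_one hd
  obtain ⟨k, -, hk⟩ := exists_mem_notMem_of_card_lt_card (s := {j, j'}) (t := univ) (by
    calc #({j, j'} : Finset (Fin m)) ≤ 2 := card_le_two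
      _ < #univ := by rw [card_univ, Fintype.card_fin]; omega)
  simp only [mem_insert, mem_singleton, not_or] at hk
  obtain ⟨c, hc⟩ := hlin
  have hkey : (Pi.single k 1 : Fin m → ZMod 2) k = 1 := Pi.single_eq_same k _
  calc ∑ x with x j = 0, f x
      = ∑ x with x j = 0 ∧ x j' = 0, (f x + f (x + d)) := by
        rw [sum_eq_sum_filter_add_translate (q := fun x => x j' = 0) (a := d) ?_
          (fun _ => add_apply_eq_zero_iff hj'), filter_filter]
        intro x hx
        simp only [mem_filter, mem_univ, true_and, Pi.add_apply, hdj, add_zero] at hx ⊢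
        exact hx
    _ = ∑ x : Fin m → ZMod 2 with x j = 0 ∧ x j' = 0, c :=
        sum_congr rfl fun x _ => by rw [add_comm, hc]
    _ = ∑ x : Fin m → ZMod 2 with (x j = 0 ∧ x j' = 0) ∧ x k = 0, (c + c) := by
        rw [sum_eq_sum_filter_add_translate (q := fun x => x k = 0) (a := Pi.single k 1) ?_
          (fun _ => add_apply_eq_zero_iff hkey), filter_filter]
        intro x hx
        simp only [mem_filter, mem_univ, true_and, Pi.add_apply,
          Pi.single_eq_of_ne (Ne.symm hk.1), Pi.single_eq_of_ne (Ne.symm hk.2), add_zero] at hx ⊢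
        exact hx
    _ = 0 := by simp [CharTwo.add_self_eq_zero]

lemma eq_of_bLinStruct (hm : 3 ≤ m) {f : BF m} {j : Fin m} (hj : ∑ x with x j = 0, f x ≠ 0)
    {a b : Fin m → ZMod 2} (ha0 : a ≠ 0) (hb0 : b ≠ 0) (ha : bLinStruct f a)
    (hb : bLinStruct f b) : a = b := by
  by_contra hab
  have hab0 : a + b ≠ 0 := fun h => hab (by
    rwa [add_eq_zero_iff_eq_neg, ZModModule.neg_eq_self] at h)
  have : a j = 0 ∨ b j = 0 ∨ (a + b) j = 0 := by
    rw [Pi.add_apply]; generalize a j = u; generalize b j = v; revert u v; decide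
  rcases this with h | h | h
  · exact hj (sum_hyperplane_eq_zero_of_bLinStruct hm ha0 ha h)
  · exact hj (sum_hyperplane_eq_zero_of_bLinStruct hm hb0 hb h)
  · exact hj (sum_hyperplane_eq_zero_of_bLinStruct hm hab0 (ha.add hb) h)

lemma card_filter_abs_bFourier_bDeriv_eq_le_one (hm : 3 ≤ m) {f : BF m} {j : Fin m}
    (hj : ∑ x with x j = 0, f x ≠ 0) :
    #{a | a ≠ 0 ∧ |bFourier (bDeriv a f)| = 2 ^ m} ≤ 1 := by
  refine card_le_one.2 fun a ha b hb => ?_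
  simp only [mem_filter, mem_univ, true_and] at ha hb
  exact eq_of_bLinStruct hm hj ha.1 hb.1 (bLinStruct_of_abs_bFourier_bDeriv ha.2)
    (bLinStruct_of_abs_bFourier_bDeriv hb.2)

lemma card_fiber_bDeriv_of_bIsAPN {F : VBF m} (hF : bIsAPN F) {a : Fin m → ZMod 2}
    (ha : a ≠ 0) (x : Fin m → ZMod 2) :
    #{y | F (y + a) + F y = F (x + a) + F x} = 2 := by
  refine le_antisymm (hF a ha _) ?_
  have hxa : x ≠ x + a := fun h => ha (by simpa using congrArg (x + ·) h)
  calc 2 = #{x, x + a} := (card_pair hxa).symm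
    _ ≤ _ := card_le_card fun y hy => by
      rcases mem_insert.1 hy with rfl | hy
      · simp
      · simp only [mem_singleton.1 hy, mem_filter, mem_univ, true_and]
        rw [add_assoc, add_self_eq_zero_pi, add_zero, add_comm]

lemma sum_sq_bFourier_bDeriv_bComp_of_bIsAPN {F : VBF m} (hF : bIsAPN F)
    {a : Fin m → ZMod 2} (ha : a ≠ 0) :
    ∑ lam, bFourier (bDeriv a (bComp lam F)) ^ 2 = 2 ^ m * (2 * 2 ^ m) := by
  set D : VBF m := fun x => F (x + a) + F x
  have hcomp : ∀ lam, bDeriv a (bComp lam F) = fun x => lam ⬝ᵥ D x :=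
    fun lam => funext fun x => (dotProduct_add _ _ _).symm
  have hpairs : #{p : (Fin m → ZMod 2) × (Fin m → ZMod 2) | D p.1 = D p.2}
      = ∑ x, #{y | D y = D x} := by
    rw [card_filter, Fintype.sum_prod_type]
    exact sum_congr rfl fun x _ => by rw [card_filter]; simp only [eq_comm]
  simp only [bFourier, hcomp, sum_sq_sum_neg_one_pow_dotProduct, hpairs, D,
    card_fiber_bDeriv_of_bIsAPN hF ha, sum_const, card_univ_pi_zmod_two, smul_eq_mul]
  push_cast; ring

end

lemma sum_hyperplane_eq_zero_of_sq_bWalsh {f : BF 4} (j : Fin 4)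
    (h0 : bWalsh f 0 ^ 2 = 16) (hj : bWalsh f (Pi.single j 1) ^ 2 = 16) :
    ∑ x with x j = 0, f x = 0 := by
  have hsum := bWalsh_zero_add_bWalsh_single f j
  have hcard := two_mul_card_filter_apply_eq_zero j
  rw [sum_neg_one_pow_val] at hsum
  rw [← natCast_sum_val, ZMod.natCast_eq_zero_iff]
  have hsq : (16 : ℤ) = 4 ^ 2 := by norm_num
  rcases sq_eq_sq_iff_eq_or_eq_neg.1 (h0.trans hsq) with h0 | h0 <;>
  rcases sq_eq_sq_iff_eq_or_eq_neg.1 (hj.trans hsq) with hj | hj <;>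
  omega

lemma abs_bFourier_bDeriv_le {f : BF 4} (hf : ∑ x, f x = 0) {a : Fin 4 → ZMod 2}
    (ha : a ≠ 0) :
    |bFourier (bDeriv a f)|
      ≤ 8 * (if bFourier (bDeriv a f) ≠ 0 then 1 else 0)
        + 8 * (if |bFourier (bDeriv a f)| = 2 ^ 4 then 1 else 0) := by
  -- The autocorrelation takes its values in `{0, ±8, ±16}`.
  obtain ⟨t, ht⟩ := eight_dvd_bFourier_bDeriv (by norm_num) hf ha
  have hle := abs_bFourier_le (bDeriv a f)
  rw [ht, abs_le] at hle
  rw [ht]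
  have h1 : -2 ≤ t := by omega
  have h2 : t ≤ 2 := by omega
  interval_cases t <;> norm_num

lemma sum_abs_bFourier_bDeriv_le {f : BF 4} (hf : ∑ x, f x = 0) {j : Fin 4}
    (hj : ∑ x with x j = 0, f x ≠ 0) (hN : #{a | a ≠ 0 ∧ bFourier (bDeriv a f) ≠ 0} ≤ 4) :
    ∑ a with a ≠ 0, |bFourier (bDeriv a f)| ≤ 40 := by
  have hL := card_filter_abs_bFourier_bDeriv_eq_le_one (by norm_num) hj
  calc ∑ a with a ≠ 0, |bFourier (bDeriv a f)|
      ≤ ∑ a with a ≠ 0, (8 * (if bFourier (bDeriv a f) ≠ 0 then 1 else 0)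
          + 8 * (if |bFourier (bDeriv a f)| = 2 ^ 4 then 1 else 0)) :=
        sum_le_sum fun a ha => abs_bFourier_bDeriv_le hf (mem_filter.1 ha).2
    _ = 8 * (#{a | a ≠ 0 ∧ bFourier (bDeriv a f) ≠ 0} : ℤ)
          + 8 * (#{a | a ≠ 0 ∧ |bFourier (bDeriv a f)| = 2 ^ 4} : ℤ) := by
        simp only [sum_add_distrib, ← mul_sum, sum_boole, filter_filter]
    _ ≤ 40 := by omega

lemma sq_bWalsh_eq_of_sum_abs_bFourier_bDeriv_le {f : BF 4} (hf : ∑ x, f x = 0)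
    (hbound : ∑ a with a ≠ 0, |bFourier (bDeriv a f)| ≤ 40) (u : Fin 4 → ZMod 2) :
    bWalsh f u ^ 2 = 16 := by
  -- Every `W_f(u)²` is a square of a multiple of 4 below `16 + 40`, hence at most 16;
  -- Parseval forces equality everywhere.
  have hle : ∀ v, bWalsh f v ^ 2 ≤ 16 := fun v => by
    obtain ⟨t, ht⟩ := four_dvd_bWalsh (by norm_num) hf v
    have : bWalsh f v ^ 2 ≤ 2 ^ 4 + 40 := (sq_bWalsh_le f v).trans (by gcongr)
    rw [ht] at this ⊢
    have h1 : -1 ≤ t := by nlinarith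
    have h2 : t ≤ 1 := by nlinarith
    interval_cases t <;> norm_num
  have hparseval : ∑ v, bWalsh f v ^ 2 = ∑ _v : Fin 4 → ZMod 2, 16 := by
    rw [sum_sq_bWalsh, sum_const, card_univ_pi_zmod_two]; norm_num
  exact (sum_eq_sum_iff_of_le fun v _ => hle v).1 hparseval u (mem_univ u)

theorem card_bGamma_le {f : BF 4} (hdeg : bAlgDeg f = 3) : #(bGamma f) ≤ 10 := by
  have hf := sum_eq_zero_of_bAlgDeg_lt (hdeg.trans_lt (by norm_num))
  obtain ⟨j, hj⟩ := exists_sum_hyperplane_ne_zero (f := f) (by norm_num) (by rw [hdeg])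
  by_contra! hΓ
  have hpartition := card_bGamma_add_card_filter_bFourier_bDeriv_ne_zero (by norm_num) f
  have hW := sq_bWalsh_eq_of_sum_abs_bFourier_bDeriv_le hf
    (sum_abs_bFourier_bDeriv_le hf hj (by omega))
  exact hj (sum_hyperplane_eq_zero_of_sq_bWalsh j (hW 0) (hW _))

lemma card_filter_bFourier_bDeriv_bComp_ne_zero_le {F : VBF 4} (hF : bIsAPN F)
    (hsum : ∀ lam, lam ≠ 0 → ∑ x, bComp lam F x = 0) {a : Fin 4 → ZMod 2} (ha : a ≠ 0) :
    #{lam | lam ≠ 0 ∧ bFourier (bDeriv a (bComp lam F)) ≠ 0} ≤ 4 := by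
  have hparseval := sum_sq_bFourier_bDeriv_bComp_of_bIsAPN hF ha
  rw [← add_sum_erase _ _ (mem_univ 0), ← filter_ne'] at hparseval
  have hzero : bFourier (bDeriv a (bComp 0 F)) ^ 2 = 2 ^ 4 * 2 ^ 4 := by
    simp [bFourier, bDeriv, bComp]
  have hge : ∀ lam ∈ ({lam | lam ≠ 0 ∧ bFourier (bDeriv a (bComp lam F)) ≠ 0} : Finset _),
      64 ≤ bFourier (bDeriv a (bComp lam F)) ^ 2 := fun lam hlam => by
    obtain ⟨hlam, hne⟩ := (mem_filter.1 hlam).2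
    obtain ⟨t, ht⟩ := eight_dvd_bFourier_bDeriv (by norm_num) (hsum lam hlam) ha
    rw [ht] at hne ⊢
    have : t ≠ 0 := by rintro rfl; simp at hne
    have : 0 < t ^ 2 := by positivity
    nlinarith
  have hsub : ∑ lam with lam ≠ 0 ∧ bFourier (bDeriv a (bComp lam F)) ≠ 0,
      bFourier (bDeriv a (bComp lam F)) ^ 2
        ≤ ∑ lam with lam ≠ 0, bFourier (bDeriv a (bComp lam F)) ^ 2 :=
    sum_le_sum_of_subset_of_nonneg (fun lam => by simp only [mem_filter]; tauto)
      fun _ _ _ => sq_nonneg _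
  have hcount := card_nsmul_le_sum _ _ _ hge
  rw [nsmul_eq_mul] at hcount
  have : (#{lam | lam ≠ 0 ∧ bFourier (bDeriv a (bComp lam F)) ≠ 0} : ℤ) ≤ 4 := by
    linarith
  exact_mod_cast this

theorem exists_card_bGamma_ge {F : VBF 4} (hF : bIsAPN F)
    (hdeg : ∀ lam, lam ≠ 0 → bAlgDeg (bComp lam F) ≤ 3) :
    ∃ lam, lam ≠ 0 ∧ 11 ≤ #(bGamma (bComp lam F)) := by
  have hsum : ∀ lam, lam ≠ 0 → ∑ x, bComp lam F x = 0 := fun lam hlam =>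
    sum_eq_zero_of_bAlgDeg_lt ((hdeg lam hlam).trans_lt (by norm_num))
  by_contra! hsmall
  have hcolumn : ∀ a ∈ ({a | a ≠ 0} : Finset (Fin 4 → ZMod 2)),
      11 ≤ #(({lam | lam ≠ 0} : Finset _).bipartiteBelow
        (fun lam a => a ∈ bGamma (bComp lam F)) a) := fun a ha => by
    have hA := card_filter_bFourier_bDeriv_bComp_ne_zero_le hF hsum (mem_filter.1 ha).2
    have hsplit := card_filter_ne_zero_and_add_card_filter_ne_zero_and_not
      (m := 4) fun lam => bFourier (bDeriv a (bComp lam F)) = 0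
    simp only [bipartiteBelow, mem_bGamma_iff (show 4 ≠ 0 by norm_num), filter_filter]
    simp only [ne_eq] at hA hsplit ⊢
    omega
  have hrow : ∀ lam ∈ ({lam | lam ≠ 0} : Finset (Fin 4 → ZMod 2)),
      #(({a | a ≠ 0} : Finset _).bipartiteAbove
        (fun lam a => a ∈ bGamma (bComp lam F)) lam) ≤ 10 := fun lam hlam =>
    (card_le_card fun a ha => (mem_filter.1 ha).2).trans
      (Nat.le_of_lt_succ (hsmall lam (mem_filter.1 hlam).2))
  have := card_mul_le_card_mul' _ hcolumn hrow
  rw [card_filter_ne_zero] at this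
  norm_num at this

theorem stmt18 (F : VBF 4) (hF : bIsAPN F)
    (hcubic : ∀ lam : Fin 4 → ZMod 2, lam ≠ 0 → bAlgDeg (bComp lam F) = 3) :
    False := by
  obtain ⟨lam, hlam, hmany⟩ := exists_card_bGamma_ge hF fun lam hlam => (hcubic lam hlam).le
  have hfew := card_bGamma_le (hcubic lam hlam)
  omega
end
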